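/- arXiv:2507.13257 — 7 statements merged into one kernel-verified Lean document; each statement's English description precedes it below -/
import Mathlib

section
/- For any ζ ∈ ℂⁿ, writing ζ·ζ = Σ_j ζ_j², any complex square root w of ζ·ζ satisfies |Re w| ≤ ‖Re ζ‖ and |Im w| ≤ ‖Im ζ‖, where Re ζ and Im ζ are the vectors of real and imaginary parts. -/
open Complex

theorem sqrt_dot_re_im_estimate (n : ℕ) (ζ : Fin n → ℂ) (w : ℂ)
    (hw : w ^ 2 = ∑ j, ζ j ^ 2) :
    |w.re| ≤ Real.sqrt (∑ j, (ζ j).re ^ 2) ∧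
      |w.im| ≤ Real.sqrt (∑ j, (ζ j).im ^ 2) := by
  set x := w.re
  set y := w.im
  set A := ∑ j, (ζ j).re ^ 2 with hA
  set B := ∑ j, (ζ j).im ^ 2 with hB
  have hre : x ^ 2 - y ^ 2 = A - B := by
    have := congrArg Complex.re hw
    simpa [Complex.sq_norm, pow_two, Complex.mul_re, Complex.re_sum, hA, hB,
      Finset.sum_sub_distrib] using this
  have him := congrArg Complex.im hw
  simp only [pow_two, Complex.mul_im, Complex.im_sum] at him
  have hxy : x * y = ∑ j, (ζ j).re * (ζ j).im := by
    have hs : ∑ j, ((ζ j).re * (ζ j).im + (ζ j).im * (ζ j).re)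
        = 2 * ∑ j, (ζ j).re * (ζ j).im := by
      rw [Finset.mul_sum]; exact Finset.sum_congr rfl fun j _ => by ring
    rw [hs] at him; linarith
  have hcs : (x * y) ^ 2 ≤ A * B := by
    rw [hxy]
    exact Finset.sum_mul_sq_le_sq_mul_sq Finset.univ _ _
  have hA0 : 0 ≤ A := Finset.sum_nonneg fun j _ => sq_nonneg _
  have hB0 : 0 ≤ B := Finset.sum_nonneg fun j _ => sq_nonneg _
  have hx : x ^ 2 ≤ A := by nlinarith [sq_nonneg x, sq_nonneg y, sq_nonneg (x*y)]
  have hy : y ^ 2 ≤ B := by nlinarith [sq_nonneg x, sq_nonneg y, sq_nonneg (x*y)]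
  exact ⟨Real.abs_le_sqrt hx, Real.abs_le_sqrt hy⟩
end

section
/- Let F be a C² function on (0,∞), α a complex number with Re α > 1, and define G(t) = ∫_0^1 F(tu)(1-u²)^{α-1} u^{n-1} du for t > 0 and a fixed integer n ≥ 2. Then ∫_0^1 (F''(tu) + ((n-1)/(tu)) F'(tu)) (1-u²)^{α-1} u^{n-1} du = G''(t) + ((n-1+2α)/t) G'(t), and both sides equal ((2α-2)/t) ∫_0^1 F'(tu)(1-u²)^{α-2} u^n du. -/
open Complex intervalIntegral MeasureTheory Metric Set Filter
open scoped ContDiff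

private lemma cast_one_sub_sq (u : ℝ) : (1 : ℂ) - (u : ℂ) ^ 2 = ((1 - u ^ 2 : ℝ) : ℂ) := by
  push_cast; ring

private lemma w_continuous {β : ℂ} (hβ : 0 < β.re) :
    Continuous (fun u : ℝ => ((1 : ℂ) - (u : ℂ) ^ 2) ^ β) := by
  have h : (fun u : ℝ => ((1 : ℂ) - (u : ℂ) ^ 2) ^ β)
      = (fun x : ℝ => (x : ℂ) ^ β) ∘ (fun u : ℝ => 1 - u ^ 2) := by
    funext u
    simp only [Function.comp_apply]
    rw [cast_one_sub_sq]
  rw [h]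
  exact (Complex.continuous_ofReal_cpow_const hβ).comp (by continuity)

private lemma w2_integrable {β : ℂ} (hβ : -1 < β.re) :
    IntervalIntegrable (fun u : ℝ => ((1 : ℂ) - (u : ℂ) ^ 2) ^ β) volume 0 1 := by
  have h1 : IntervalIntegrable (fun u : ℝ => ((1 - u : ℝ) : ℂ) ^ β) volume 0 1 := by
    have := (intervalIntegrable_cpow' (a := 1) (b := 0) hβ).comp_sub_left 1
    simpa using this
  have h2 : ContinuousOn (fun u : ℝ => ((1 + u : ℝ) : ℂ) ^ β) (Set.uIcc (0:ℝ) 1) := by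
    intro u hu
    rw [Set.uIcc_of_le (by norm_num : (0:ℝ) ≤ 1)] at hu
    have : ContinuousAt (fun u : ℝ => ((1 + u : ℝ) : ℂ) ^ β) u := by
      have hc : ContinuousAt (fun x : ℝ => (x : ℂ) ^ β) (1 + u) :=
        Complex.continuousAt_ofReal_cpow_const _ _ (Or.inr (by linarith [hu.1]))
      exact hc.comp (by fun_prop)
    exact this.continuousWithinAt
  have h3 := h1.mul_continuousOn h2
  rw [intervalIntegrable_iff] at h3 ⊢
  refine h3.congr_fun ?_ measurableSet_uIoc
  intro u hu
  rw [Set.uIoc_of_le (by norm_num : (0:ℝ) ≤ 1)] at hu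
  have e : (1 : ℂ) - (u : ℂ) ^ 2 = ((1 - u : ℝ) : ℂ) * ((1 + u : ℝ) : ℂ) := by
    push_cast; ring
  dsimp only
  rw [e, Complex.mul_cpow_ofReal_nonneg (by linarith [hu.2]) (by linarith [hu.1])]

private lemma hasDerivAt_param (f : ℝ → ℝ) (hf : ContDiff ℝ ∞ f) (w : ℝ → ℂ)
    (hw : Continuous w) (s : ℝ) :
    HasDerivAt (fun s : ℝ => ∫ u in (0:ℝ)..1, ((f (s * u) : ℝ) : ℂ) * w u)
      (∫ u in (0:ℝ)..1, ((u * deriv f (s * u) : ℝ) : ℂ) * w u) s := by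
  obtain ⟨M, hM⟩ := (isCompact_Icc (a := -(|s|+1)) (b := |s|+1)).exists_bound_of_continuousOn
    ((hf.continuous_deriv (by norm_num)).continuousOn)
  have hcont : ∀ x : ℝ, Continuous fun u : ℝ => ((f (x * u) : ℝ) : ℂ) * w u := fun x =>
    (Complex.continuous_ofReal.comp (hf.continuous.comp (by fun_prop))).mul hw
  have key := intervalIntegral.hasDerivAt_integral_of_dominated_loc_of_deriv_le
    (μ := volume)
    (F := fun x u => ((f (x * u) : ℝ) : ℂ) * w u)
    (F' := fun x u => ((u * deriv f (x * u) : ℝ) : ℂ) * w u)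
    (x₀ := s) (a := 0) (b := 1) (bound := fun u => (|M|+1) * ‖w u‖) (ball_mem_nhds s zero_lt_one)
    (Filter.Eventually.of_forall fun x => (hcont x).aestronglyMeasurable)
    ((hcont s).intervalIntegrable _ _)
    (((Complex.continuous_ofReal.comp (by
        have : Continuous (deriv f) := hf.continuous_deriv (by norm_num)
        fun_prop)).mul hw).aestronglyMeasurable)
    ?_ (((continuous_const.mul hw.norm)).intervalIntegrable _ _) ?_
  · exact key.2
  · refine Filter.Eventually.of_forall fun u hu x hx => ?_
    rw [Set.uIoc_of_le (by norm_num : (0:ℝ) ≤ 1)] at hu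
    rw [norm_mul, Complex.norm_real, Real.norm_eq_abs, abs_mul]
    have hxb : |x| ≤ |s| + 1 := by
      have h := abs_sub_abs_le_abs_sub x s
      rw [mem_ball, Real.dist_eq] at hx
      linarith
    have h1 : |u| ≤ 1 := by rw [abs_of_pos hu.1]; exact hu.2
    have hxub : |x * u| ≤ |s| + 1 := by
      rw [abs_mul]
      exact le_trans (mul_le_of_le_one_right (abs_nonneg x) h1) hxb
    have hxu : x * u ∈ Icc (-(|s|+1)) (|s|+1) := by
      rcases abs_le.mp hxub with ⟨ha, hb⟩
      exact ⟨ha, hb⟩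
    have hb := hM _ hxu
    rw [Real.norm_eq_abs] at hb
    have h2 : |deriv f (x*u)| ≤ |M| + 1 := le_trans hb (by
      have := le_abs_self M; linarith)
    have : |u| * |deriv f (x * u)| ≤ |M| + 1 := by
      nlinarith [abs_nonneg u, abs_nonneg (deriv f (x*u))]
    exact mul_le_mul_of_nonneg_right this (norm_nonneg _)
  · refine Filter.Eventually.of_forall fun u hu x hx => ?_
    have h1 : HasDerivAt (fun x : ℝ => x * u) u x := by
      simpa using (hasDerivAt_id x).mul_const u
    have h2 : HasDerivAt (fun x : ℝ => f (x * u)) (deriv f (x * u) * u) x :=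
      ((hf.differentiable (by norm_num) _).hasDerivAt).comp x h1
    have h3 := h2.ofReal_comp.mul_const (w u)
    refine h3.congr_deriv ?_
    push_cast; ring

private lemma ftc_key (α : ℂ) (hα : 1 < α.re) (φ : ℝ → ℝ) (hφ : ContDiff ℝ ∞ φ)
    (m : ℕ) (hm : 1 ≤ m) (t : ℝ) :
    (∫ u in (0:ℝ)..1, ((deriv φ (t * u) : ℝ) : ℂ) * (u:ℂ)^m * ((1:ℂ) - (u:ℂ)^2) ^ (α - 1)) * (t:ℂ)
      + (α - 1) * (-2) *
        (∫ u in (0:ℝ)..1, ((φ (t * u) : ℝ) : ℂ) * (u:ℂ)^(m+1) * ((1:ℂ) - (u:ℂ)^2) ^ (α - 2))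
      + (m : ℂ) *
        (∫ u in (0:ℝ)..1, ((φ (t * u) : ℝ) : ℂ) * (u:ℂ)^(m-1) * ((1:ℂ) - (u:ℂ)^2) ^ (α - 1)) = 0 := by
  have hα1 : (0:ℝ) < (α-1).re := by simp only [Complex.sub_re, Complex.one_re]; linarith
  have hα2 : (-1:ℝ) < (α-2).re := by
    have : (α - 2).re = α.re - 2 := by simp [Complex.sub_re]
    linarith [this]
  have hane : α - 1 ≠ 0 := fun h => by rw [h] at hα1; simp at hα1
  have hw1 : Continuous (fun u : ℝ => ((1:ℂ)-(u:ℂ)^2)^(α-1)) := w_continuous hα1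
  have hφcont : Continuous fun u : ℝ => ((φ (t*u) : ℝ) : ℂ) :=
    Complex.continuous_ofReal.comp (hφ.continuous.comp (by fun_prop))
  have hdφcont : Continuous fun u : ℝ => ((deriv φ (t*u) : ℝ) : ℂ) := by
    have : Continuous (deriv φ) := hφ.continuous_deriv (by norm_num)
    exact Complex.continuous_ofReal.comp (this.comp (by fun_prop))
  have hpowc : ∀ j : ℕ, Continuous fun u : ℝ => (u:ℂ)^j := fun j =>
    (Complex.continuous_ofReal).pow j
  -- the function and its derivative
  set g : ℝ → ℂ := fun u => ((φ (t*u) : ℝ) : ℂ) * (u:ℂ)^m * ((1:ℂ)-(u:ℂ)^2)^(α-1) with hg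
  set g' : ℝ → ℂ := fun u =>
      ((deriv φ (t*u) : ℝ) : ℂ) * (u:ℂ)^m * ((1:ℂ)-(u:ℂ)^2)^(α-1) * (t:ℂ)
      + (α-1) * (-2) * (((φ (t*u) : ℝ) : ℂ) * (u:ℂ)^(m+1) * ((1:ℂ)-(u:ℂ)^2)^(α-2))
      + (m:ℂ) * (((φ (t*u) : ℝ) : ℂ) * (u:ℂ)^(m-1) * ((1:ℂ)-(u:ℂ)^2)^(α-1)) with hg'
  have hint1 : IntervalIntegrable
      (fun u : ℝ => ((deriv φ (t*u) : ℝ) : ℂ) * (u:ℂ)^m * ((1:ℂ)-(u:ℂ)^2)^(α-1) * (t:ℂ))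
      volume 0 1 :=
    Continuous.intervalIntegrable (((hdφcont.mul (hpowc m)).mul hw1).mul continuous_const) _ _
  have hint2 : IntervalIntegrable
      (fun u : ℝ => (α-1) * (-2) * (((φ (t*u) : ℝ) : ℂ) * (u:ℂ)^(m+1) * ((1:ℂ)-(u:ℂ)^2)^(α-2)))
      volume 0 1 := by
    have base := (w2_integrable hα2).continuousOn_mul
      (g := fun u : ℝ => (α-1) * (-2) * (((φ (t*u) : ℝ) : ℂ) * (u:ℂ)^(m+1)))
      (Continuous.continuousOn (continuous_const.mul (hφcont.mul (hpowc (m+1)))))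
    apply base.congr
    intro u _; beta_reduce
    ring
  have hint3 : IntervalIntegrable
      (fun u : ℝ => (m:ℂ) * (((φ (t*u) : ℝ) : ℂ) * (u:ℂ)^(m-1) * ((1:ℂ)-(u:ℂ)^2)^(α-1)))
      volume 0 1 :=
    Continuous.intervalIntegrable (continuous_const.mul ((hφcont.mul (hpowc (m-1))).mul hw1)) _ _
  have hint : IntervalIntegrable g' volume 0 1 := (hint1.add hint2).add hint3
  have hderiv : ∀ u ∈ Ioo (0:ℝ) 1, HasDerivAt g (g' u) u := by
    intro u hu
    have hb : (0:ℝ) < 1 - u^2 := by nlinarith [hu.1, hu.2]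
    have hslit : (1:ℂ) - (u:ℂ)^2 ∈ Complex.slitPlane := by
      rw [cast_one_sub_sq]; exact Complex.ofReal_mem_slitPlane.2 hb
    have hpowR : ∀ j : ℕ, HasDerivAt (fun u : ℝ => (u:ℂ)^j) ((j:ℂ) * (u:ℂ)^(j-1)) u := by
      intro j
      have h := (hasDerivAt_pow j u).ofReal_comp
      have hfn : (fun u : ℝ => ((u^j : ℝ):ℂ)) = fun u : ℝ => (u:ℂ)^j := by
        funext v; push_cast; ring
      rw [hfn] at h
      convert h using 1
      push_cast; ring
    have hinner : HasDerivAt (fun u : ℝ => (1:ℂ) - (u:ℂ)^2) (-(2*(u:ℂ))) u := by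
      have h := (hpowR 2).const_sub (1:ℂ)
      refine h.congr_deriv ?_
      norm_num
    have hW1' : HasDerivAt (fun u : ℝ => ((1:ℂ)-(u:ℂ)^2)^(α-1))
        ((α-1) * ((1:ℂ)-(u:ℂ)^2)^(α-2) * (-(2*(u:ℂ)))) u := by
      have houter := (Complex.hasStrictDerivAt_cpow_const (c := α-1) hslit).hasDerivAt
      have h := houter.scomp u hinner
      refine h.congr_deriv ?_
      rw [show α - 2 = α - 1 - 1 by ring]
      simp [smul_eq_mul]
      ring
    have hlin : HasDerivAt (fun u : ℝ => t * u) t u := by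
      simpa using (hasDerivAt_id u).const_mul t
    have hφ1 : HasDerivAt (fun u : ℝ => φ (t * u)) (deriv φ (t * u) * t) u :=
      ((hφ.differentiable (by norm_num) _).hasDerivAt).comp u hlin
    have hφ2 := hφ1.ofReal_comp
    have hpow : HasDerivAt (fun u : ℝ => (u:ℂ)^m) ((m:ℂ) * (u:ℂ)^(m-1)) u := hpowR m
    have htot := (hφ2.mul hpow).mul hW1'
    refine htot.congr_deriv ?_
    simp only [hg', Pi.mul_apply]
    push_cast
    ring
  have hcg : Continuous g := by
    apply Continuous.mul (Continuous.mul hφcont (hpowc m)) hw1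
  have h0 : Tendsto g (nhdsWithin 0 (Ioi 0)) (nhds 0) := by
    have h : Tendsto g (nhdsWithin (0:ℝ) (Ioi 0)) (nhds (g 0)) :=
      (hcg.tendsto 0).mono_left nhdsWithin_le_nhds
    have hg0 : g 0 = 0 := by
      simp [hg, zero_pow (by omega : m ≠ 0)]
    rwa [hg0] at h
  have h1 : Tendsto g (nhdsWithin 1 (Iio 1)) (nhds 0) := by
    have h : Tendsto g (nhdsWithin (1:ℝ) (Iio 1)) (nhds (g 1)) :=
      (hcg.tendsto 1).mono_left nhdsWithin_le_nhds
    have hg1 : g 1 = 0 := by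
      simp [hg, Complex.zero_cpow hane]
    rwa [hg1] at h
  have hI := intervalIntegral.integral_eq_sub_of_hasDerivAt_of_tendsto
    (f := g) (f' := g') zero_lt_one hderiv hint h0 h1
  rw [sub_zero] at hI
  calc
    (∫ u in (0:ℝ)..1, ((deriv φ (t * u) : ℝ) : ℂ) * (u:ℂ)^m * ((1:ℂ) - (u:ℂ)^2) ^ (α - 1)) * (t:ℂ)
      + (α - 1) * (-2) *
        (∫ u in (0:ℝ)..1, ((φ (t * u) : ℝ) : ℂ) * (u:ℂ)^(m+1) * ((1:ℂ) - (u:ℂ)^2) ^ (α - 2))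
      + (m : ℂ) *
        (∫ u in (0:ℝ)..1, ((φ (t * u) : ℝ) : ℂ) * (u:ℂ)^(m-1) * ((1:ℂ) - (u:ℂ)^2) ^ (α - 1))
      = ∫ u in (0:ℝ)..1, g' u := by
        rw [← intervalIntegral.integral_mul_const, ← intervalIntegral.integral_const_mul,
          ← intervalIntegral.integral_const_mul, ← intervalIntegral.integral_add hint1 hint2,
          ← intervalIntegral.integral_add (hint1.add hint2) hint3]
    _ = 0 := hI

open Complex intervalIntegral

/-- The EPD key identity: with `G(t) = ∫₀¹ F(tu)(1-u²)^(α-1) u^(n-1) du`, the EPD operator applied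
to `G` matches the integral of the radial Laplacian applied to `F`, and both sides equal
`((2α-2)/t) ∫₀¹ F'(tu)(1-u²)^(α-2) uⁿ du`. -/
theorem epd_integral_identity (n : ℕ) (hn : 2 ≤ n) (α : ℂ) (hα : 1 < α.re)
    (F : ℝ → ℝ) (hF : ContDiff ℝ (⊤ : ℕ∞) F) (hF0 : deriv F 0 = 0)
    (G : ℝ → ℂ)
    (hG : ∀ t : ℝ, G t =
      ∫ u in (0:ℝ)..1, (F (t * u) : ℂ) * ((1 : ℂ) - (u : ℂ) ^ 2) ^ (α - 1) * (u : ℂ) ^ (n - 1))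
    (t : ℝ) (ht : 0 < t) :
    ((∫ u in (0:ℝ)..1,
        (((deriv (deriv F) (t * u) : ℝ) : ℂ) + ((n : ℂ) - 1) / ((t : ℂ) * u) * ((deriv F (t * u) : ℝ) : ℂ)) *
          ((1 : ℂ) - (u : ℂ) ^ 2) ^ (α - 1) * (u : ℂ) ^ (n - 1)) =
      deriv (deriv G) t + (((n : ℂ) - 1 + 2 * α) / (t : ℂ)) * deriv G t) ∧
    deriv (deriv G) t + (((n : ℂ) - 1 + 2 * α) / (t : ℂ)) * deriv G t =
      ((2 * α - 2) / (t : ℂ)) *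
        ∫ u in (0:ℝ)..1,
          ((deriv F (t * u) : ℝ) : ℂ) * ((1 : ℂ) - (u : ℂ) ^ 2) ^ (α - 2) * (u : ℂ) ^ n := by
  obtain ⟨k, rfl⟩ : ∃ k, n = 2 + k := ⟨n - 2, by omega⟩
  have hα1 : (0:ℝ) < (α-1).re := by simp only [Complex.sub_re, Complex.one_re]; linarith
  have hα2 : (-1:ℝ) < (α-2).re := by
    have h : (α - 2).re = α.re - 2 := by simp [Complex.sub_re]
    linarith [h]
  have hane : α - 1 ≠ 0 := fun h => by rw [h] at hα1; simp at hα1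
  have ht' : (t:ℂ) ≠ 0 := Complex.ofReal_ne_zero.mpr ht.ne'
  have hFi : ContDiff ℝ ∞ F := hF.of_le (by simp)
  have hF' : ContDiff ℝ ∞ (deriv F) := (contDiff_infty_iff_deriv.mp hFi).2
  have hw1 : Continuous (fun u : ℝ => ((1:ℂ)-(u:ℂ)^2)^(α-1)) := w_continuous hα1
  have hsub : 2 + k - 1 = k + 1 := by omega
  have hF'c : Continuous fun u : ℝ => ((deriv F (t*u) : ℝ):ℂ) := by
    have : Continuous (deriv F) := hF'.continuous
    exact Complex.continuous_ofReal.comp (this.comp (by fun_prop))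
  have hF''c : Continuous fun u : ℝ => ((deriv (deriv F) (t*u) : ℝ):ℂ) := by
    have : Continuous (deriv (deriv F)) := hF'.continuous_deriv (by norm_num)
    exact Complex.continuous_ofReal.comp (this.comp (by fun_prop))
  have hpowc : ∀ j : ℕ, Continuous fun u : ℝ => (u:ℂ)^j := fun j =>
    (Complex.continuous_ofReal).pow j
  -- derivatives of G
  have hGeq : G = fun s => ∫ u in (0:ℝ)..1, ((F (s*u) : ℝ) : ℂ)
      * (((1:ℂ)-(u:ℂ)^2)^(α-1) * (u:ℂ)^(k+1)) := by
    funext s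
    rw [hG s]
    refine intervalIntegral.integral_congr fun u hu => ?_
    rw [hsub]; ring
  have hG1 : ∀ s : ℝ, HasDerivAt G (∫ u in (0:ℝ)..1, ((u * deriv F (s*u) : ℝ):ℂ)
      * (((1:ℂ)-(u:ℂ)^2)^(α-1) * (u:ℂ)^(k+1))) s := by
    intro s
    rw [hGeq]
    exact hasDerivAt_param F hFi _ (hw1.mul (hpowc (k+1))) s
  have hdG : deriv G = fun s => ∫ u in (0:ℝ)..1, ((u * deriv F (s*u) : ℝ):ℂ)
      * (((1:ℂ)-(u:ℂ)^2)^(α-1) * (u:ℂ)^(k+1)) := funext fun s => (hG1 s).deriv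
  have hdG2 : deriv G = fun s => ∫ u in (0:ℝ)..1, ((deriv F (s*u) : ℝ):ℂ)
      * ((u:ℂ) * (((1:ℂ)-(u:ℂ)^2)^(α-1) * (u:ℂ)^(k+1))) := by
    rw [hdG]
    funext s
    refine intervalIntegral.integral_congr fun u hu => ?_
    push_cast; ring
  have hG2 : HasDerivAt (deriv G) (∫ u in (0:ℝ)..1, ((u * deriv (deriv F) (t*u) : ℝ):ℂ)
      * ((u:ℂ) * (((1:ℂ)-(u:ℂ)^2)^(α-1) * (u:ℂ)^(k+1)))) t := by
    rw [hdG2]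
    exact hasDerivAt_param (deriv F) hF' _
      (Complex.continuous_ofReal.mul (hw1.mul (hpowc (k+1)))) t
  -- the two FTC identities
  have eq1 := ftc_key α hα (deriv F) hF' (k+1) (by omega) t
  have eq2 := ftc_key α hα (deriv F) hF' (k+3) (by omega) t
  simp only [show k+1+1 = k+2 by omega, show k+1-1 = k by omega,
    show k+3+1 = k+4 by omega, show k+3-1 = k+2 by omega] at eq1 eq2
  push_cast at eq1 eq2
  -- integrability facts
  have hBint : IntervalIntegrable
      (fun u : ℝ => ((deriv F (t*u) : ℝ):ℂ) * (u:ℂ)^(k+2) * ((1:ℂ)-(u:ℂ)^2)^(α-2)) volume 0 1 :=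
    (w2_integrable hα2).continuousOn_mul (Continuous.continuousOn (hF'c.mul (hpowc (k+2))))
  have hB2int : IntervalIntegrable
      (fun u : ℝ => ((deriv F (t*u) : ℝ):ℂ) * (u:ℂ)^(k+4) * ((1:ℂ)-(u:ℂ)^2)^(α-2)) volume 0 1 :=
    (w2_integrable hα2).continuousOn_mul (Continuous.continuousOn (hF'c.mul (hpowc (k+4))))
  -- splitting identity E = B - B2
  have eq3 : (∫ u in (0:ℝ)..1, ((deriv F (t*u) : ℝ):ℂ) * (u:ℂ)^(k+2) * ((1:ℂ)-(u:ℂ)^2)^(α-1))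
      = (∫ u in (0:ℝ)..1, ((deriv F (t*u) : ℝ):ℂ) * (u:ℂ)^(k+2) * ((1:ℂ)-(u:ℂ)^2)^(α-2))
      - (∫ u in (0:ℝ)..1, ((deriv F (t*u) : ℝ):ℂ) * (u:ℂ)^(k+4) * ((1:ℂ)-(u:ℂ)^2)^(α-2)) := by
    rw [← intervalIntegral.integral_sub hBint hB2int]
    refine intervalIntegral.integral_congr fun u hu => ?_
    rw [Set.uIcc_of_le (by norm_num : (0:ℝ) ≤ 1)] at hu
    rcases eq_or_lt_of_le hu.2 with h1 | h1
    · rw [h1]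
      simp [Complex.zero_cpow hane]
    · have hbne : (1:ℂ) - (u:ℂ)^2 ≠ 0 := by
        rw [cast_one_sub_sq]
        exact Complex.ofReal_ne_zero.mpr (by nlinarith [hu.1])
      rw [show α - 1 = (α - 2) + 1 by ring, Complex.cpow_add _ _ hbne, Complex.cpow_one]
      ring
  -- rewrite second derivative and first derivative values
  have hDval : (∫ u in (0:ℝ)..1, ((u * deriv (deriv F) (t*u) : ℝ):ℂ)
      * ((u:ℂ) * (((1:ℂ)-(u:ℂ)^2)^(α-1) * (u:ℂ)^(k+1))))
      = ∫ u in (0:ℝ)..1, ((deriv (deriv F) (t*u) : ℝ):ℂ) * (u:ℂ)^(k+3) * ((1:ℂ)-(u:ℂ)^2)^(α-1) := by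
    refine intervalIntegral.integral_congr fun u hu => ?_
    push_cast; ring
  have hEval : (∫ u in (0:ℝ)..1, ((u * deriv F (t*u) : ℝ):ℂ)
      * (((1:ℂ)-(u:ℂ)^2)^(α-1) * (u:ℂ)^(k+1)))
      = ∫ u in (0:ℝ)..1, ((deriv F (t*u) : ℝ):ℂ) * (u:ℂ)^(k+2) * ((1:ℂ)-(u:ℂ)^2)^(α-1) := by
    refine intervalIntegral.integral_congr fun u hu => ?_
    push_cast; ring
  -- the left-hand side integral splits
  have hLval : (∫ u in (0:ℝ)..1,
        (((deriv (deriv F) (t * u) : ℝ) : ℂ) + (((2+k : ℕ) : ℂ) - 1) / ((t : ℂ) * u) * ((deriv F (t * u) : ℝ) : ℂ)) *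
          ((1 : ℂ) - (u : ℂ) ^ 2) ^ (α - 1) * (u : ℂ) ^ (2 + k - 1))
      = (∫ u in (0:ℝ)..1, ((deriv (deriv F) (t*u) : ℝ):ℂ) * (u:ℂ)^(k+1) * ((1:ℂ)-(u:ℂ)^2)^(α-1))
        + (((k:ℂ)+1)/(t:ℂ)) *
          ∫ u in (0:ℝ)..1, ((deriv F (t*u) : ℝ):ℂ) * (u:ℂ)^k * ((1:ℂ)-(u:ℂ)^2)^(α-1) := by
    rw [← intervalIntegral.integral_const_mul, ← intervalIntegral.integral_add
      (f := fun u : ℝ => ((deriv (deriv F) (t*u) : ℝ):ℂ) * (u:ℂ)^(k+1) * ((1:ℂ)-(u:ℂ)^2)^(α-1))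
      (g := fun u : ℝ => ((k:ℂ)+1)/(t:ℂ) * (((deriv F (t*u) : ℝ):ℂ) * (u:ℂ)^k * ((1:ℂ)-(u:ℂ)^2)^(α-1)))
      (Continuous.intervalIntegrable ((hF''c.mul (hpowc (k+1))).mul hw1) _ _)
      (Continuous.intervalIntegrable (continuous_const.mul ((hF'c.mul (hpowc k)).mul hw1)) _ _)]
    refine intervalIntegral.integral_congr fun u hu => ?_
    rw [Set.uIcc_of_le (by norm_num : (0:ℝ) ≤ 1)] at hu
    rw [hsub]
    rcases eq_or_ne u 0 with rfl | hu0
    · simp [hF0]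
    · have hu0' : (u:ℂ) ≠ 0 := Complex.ofReal_ne_zero.mpr hu0
      push_cast
      field_simp
      ring
  rw [hG2.deriv]
  simp only [hdG]
  rw [hDval, hEval, hLval]
  constructor
  · push_cast
    field_simp
    linear_combination eq1 - eq2 - (2*α - 2) * eq3
  · have hgoalB : (∫ u in (0:ℝ)..1,
        ((deriv F (t * u) : ℝ) : ℂ) * ((1 : ℂ) - (u : ℂ) ^ 2) ^ (α - 2) * (u : ℂ) ^ (2 + k))
        = ∫ u in (0:ℝ)..1, ((deriv F (t*u) : ℝ):ℂ) * (u:ℂ)^(k+2) * ((1:ℂ)-(u:ℂ)^2)^(α-2) := by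
      refine intervalIntegral.integral_congr fun u hu => ?_
      rw [show 2 + k = k + 2 by omega]
      ring
    rw [hgoalB]
    push_cast
    field_simp
    linear_combination eq2 + (2*α - 2) * eq3
end

section
/- Every j_ν-Liouville number is real. That is, if z ∈ ℂ is not a ratio a/b of two zeros of j_ν (with b ≠ 0), and for every N ∈ ℕ there exist zeros a, b of j_ν with |b| > 1 and |z - a/b| < 1/|b|^N, then Im z = 0, under the assumption that all zeros of j_ν have imaginary part bounded in absolute value by some constant M. -/
open Complex

/-- The normalized Bessel function `j_ν(z) = ∑ₖ (-1)^k / (k! Γ(k+ν+1)) (z/2)^(2k)`. -/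
noncomputable def normalizedBessel (ν : ℂ) (z : ℂ) : ℂ :=
  ∑' k : ℕ, ((-1) ^ k / ((k.factorial : ℂ) * Complex.Gamma ((k : ℂ) + ν + 1))) * (z / 2) ^ (2 * k)

namespace BesselAux

open FormalMultilinearSeries Filter

noncomputable def besselCoeff (ν : ℂ) (k : ℕ) : ℂ :=
  (-1) ^ k / ((k.factorial : ℂ) * Complex.Gamma ((k : ℂ) + ν + 1) * 4 ^ k)

lemma besselNe (ν : ℂ) (hν : ¬∃ m : ℕ, ν = -((m : ℂ) + 1)) (k : ℕ) :
    ((k : ℂ) + ν + 1) ≠ 0 := by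
  intro h
  exact hν ⟨k, by linear_combination h⟩

lemma besselGammaNe (ν : ℂ) (hν : ¬∃ m : ℕ, ν = -((m : ℂ) + 1)) (k : ℕ) :
    Complex.Gamma ((k : ℂ) + ν + 1) ≠ 0 := by
  refine Complex.Gamma_ne_zero fun m h => hν ⟨m + k, by push_cast; linear_combination h⟩

lemma besselCoeffNe (ν : ℂ) (hν : ¬∃ m : ℕ, ν = -((m : ℂ) + 1)) (k : ℕ) :
    besselCoeff ν k ≠ 0 := by
  apply div_ne_zero
  · exact pow_ne_zero _ (by norm_num)
  · exact mul_ne_zero (mul_ne_zero (Nat.cast_ne_zero.2 k.factorial_ne_zero) (besselGammaNe ν hν k))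
      (pow_ne_zero _ (by norm_num))

lemma besselCoeffRec (ν : ℂ) (hν : ¬∃ m : ℕ, ν = -((m : ℂ) + 1)) (k : ℕ) :
    besselCoeff ν (k + 1) * (4 * ((k : ℂ) + 1) * ((k : ℂ) + ν + 1)) = - besselCoeff ν k := by
  have hG : Complex.Gamma (((k + 1 : ℕ) : ℂ) + ν + 1)
      = ((k : ℂ) + ν + 1) * Complex.Gamma ((k : ℂ) + ν + 1) := by
    have : (((k + 1 : ℕ) : ℂ) + ν + 1) = ((k : ℂ) + ν + 1) + 1 := by push_cast; ring
    rw [this, Complex.Gamma_add_one _ (besselNe ν hν k)]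
  have h1 : ((k : ℂ) + 1) ≠ 0 := Nat.cast_add_one_ne_zero k
  have h2 : ((k.factorial : ℂ)) ≠ 0 := Nat.cast_ne_zero.2 k.factorial_ne_zero
  have h3 := besselGammaNe ν hν k
  have h4 := besselNe ν hν k
  have h5 : ((4 : ℂ)) ≠ 0 := by norm_num
  simp only [besselCoeff, hG, Nat.factorial_succ, Nat.cast_mul, pow_succ]
  have h6 : ((k + 1 : ℕ) : ℂ) = (k : ℂ) + 1 := by push_cast; ring
  rw [h6]
  field_simp

lemma besselRatioTendsto (ν : ℂ) (hν : ¬∃ m : ℕ, ν = -((m : ℂ) + 1)) :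
    Tendsto (fun n : ℕ => ‖besselCoeff ν n.succ‖ / ‖besselCoeff ν n‖) atTop (nhds 0) := by
  have hform : ∀ n : ℕ, ‖besselCoeff ν n.succ‖ / ‖besselCoeff ν n‖
      = (4 * ((n : ℝ) + 1) * ‖(n : ℂ) + ν + 1‖)⁻¹ := by
    intro n
    have h := congrArg (‖·‖) (besselCoeffRec ν hν n)
    rw [norm_mul, norm_neg] at h
    have hden : ‖4 * ((n : ℂ) + 1) * ((n : ℂ) + ν + 1)‖
        = 4 * ((n : ℝ) + 1) * ‖(n : ℂ) + ν + 1‖ := by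
      rw [norm_mul, norm_mul, show ((n : ℂ) + 1) = ((n + 1 : ℕ) : ℂ) by push_cast; ring,
        Complex.norm_natCast, Complex.norm_ofNat]
      push_cast; ring
    rw [hden] at h
    have hb0 : ‖besselCoeff ν n‖ ≠ 0 := by
      simpa using besselCoeffNe ν hν n
    have hpos : (0 : ℝ) < 4 * ((n : ℝ) + 1) * ‖(n : ℂ) + ν + 1‖ :=
      mul_pos (by positivity) (norm_pos_iff.mpr (besselNe ν hν n))
    rw [← h]
    exact div_mul_cancel_left₀ (norm_ne_zero_iff.mpr (besselCoeffNe ν hν (n + 1))) _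
  rw [tendsto_congr hform]
  have hlow : ∀ᶠ n : ℕ in atTop, (n : ℝ) + 1 - ‖ν‖
      ≤ 4 * ((n : ℝ) + 1) * ‖(n : ℂ) + ν + 1‖ := by
    filter_upwards [eventually_ge_atTop 0] with n _
    have h1 : (n : ℝ) + 1 - ‖ν‖ ≤ ‖(n : ℂ) + ν + 1‖ := by
      have := norm_add_le ((n : ℂ) + ν + 1) (-ν)
      simp only [norm_neg] at this
      have he : ((n : ℂ) + ν + 1) + -ν = ((n + 1 : ℕ) : ℂ) := by push_cast; ring
      rw [he, Complex.norm_natCast] at this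
      push_cast at this
      linarith
    nlinarith [norm_nonneg ((n : ℂ) + ν + 1), norm_nonneg ν]
  have hto : Tendsto (fun n : ℕ => (n : ℝ) + 1 - ‖ν‖) atTop atTop := by
    have he : (fun n : ℕ => (n : ℝ) + 1 - ‖ν‖)
        = fun n : ℕ => (n : ℝ) + (1 - ‖ν‖) := by funext n; ring
    rw [he]
    exact tendsto_atTop_add_const_right atTop _ tendsto_natCast_atTop_atTop
  exact (tendsto_atTop_mono' atTop hlow hto).inv_tendsto_atTop

lemma besselSumEq (ν : ℂ) (z : ℂ) :
    normalizedBessel ν z = (ofScalars ℂ (besselCoeff ν)).sum (z ^ 2) := by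
  rw [show (ofScalars ℂ (besselCoeff ν)).sum (z ^ 2) = ofScalarsSum (besselCoeff ν) (z ^ 2)
    from rfl, ofScalars_sum_eq]
  refine tsum_congr fun k => ?_
  rw [besselCoeff, smul_eq_mul, ← pow_mul, div_pow]
  rw [show (2 : ℂ) ^ (2 * k) = 4 ^ k by rw [pow_mul]; norm_num,
    show z ^ (2 * k) = z ^ (k * 2) by ring_nf]
  rw [pow_mul]
  ring

lemma besselAnalytic (ν : ℂ) (hν : ¬∃ m : ℕ, ν = -((m : ℂ) + 1)) :
    AnalyticOnNhd ℂ (normalizedBessel ν) Set.univ := by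
  have hrad : (ofScalars ℂ (besselCoeff ν)).radius = ⊤ :=
    ofScalars_radius_eq_top_of_tendsto ℂ _ (Eventually.of_forall (besselCoeffNe ν hν))
      (besselRatioTendsto ν hν)
  have hball := (ofScalars ℂ (besselCoeff ν)).hasFPowerSeriesOnBall (by rw [hrad]; simp)
  intro z _
  have hsq : AnalyticAt ℂ (fun w : ℂ => w ^ 2) z := (analyticAt_id).pow 2
  have hsum : AnalyticAt ℂ (ofScalars ℂ (besselCoeff ν)).sum (z ^ 2) := by
    apply hball.analyticAt_of_mem
    rw [hrad]
    simp [edist_lt_top]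
  refine (hsum.comp_of_eq hsq rfl).congr ?_
  filter_upwards with w
  exact (besselSumEq ν w).symm

lemma besselZeroNe (ν : ℂ) (hν : ¬∃ m : ℕ, ν = -((m : ℂ) + 1)) :
    normalizedBessel ν 0 ≠ 0 := by
  rw [normalizedBessel]
  rw [tsum_eq_single 0 (fun b hb => by
    rw [zero_div, zero_pow (by omega : 2 * b ≠ 0), mul_zero])]
  simp only [pow_zero, Nat.factorial_zero, Nat.cast_one, Nat.cast_zero, zero_add, one_mul,
    mul_zero, mul_one]
  exact div_ne_zero one_ne_zero (by simpa using besselGammaNe ν hν 0)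

lemma besselZerosFinite (ν : ℂ) (hν : ¬∃ m : ℕ, ν = -((m : ℂ) + 1)) (K : ℝ) :
    {x : ℂ | ‖x‖ ≤ K ∧ normalizedBessel ν x = 0}.Finite := by
  rw [← Set.not_infinite]
  intro h
  obtain ⟨x, hxK, hacc⟩ := h.exists_accPt_of_subset_isCompact (isCompact_closedBall 0 K)
      (fun y hy => by simpa [Metric.mem_closedBall, Complex.dist_eq] using hy.1)
  have hfreq : ∃ᶠ y in nhdsWithin x {x}ᶜ, normalizedBessel ν y = 0 := by
    have hf := accPt_iff_frequently.1 hacc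
    rw [frequently_nhdsWithin_iff]
    refine hf.mono ?_
    rintro y ⟨hyne, hyS⟩
    exact ⟨hyS.2, hyne⟩
  have heq := (besselAnalytic ν hν).eqOn_zero_of_preconnected_of_frequently_eq_zero
      isPreconnected_univ (Set.mem_univ x) hfreq
  exact besselZeroNe ν hν (heq (Set.mem_univ 0))

end BesselAux

open BesselAux

/-- Every `j_ν`-Liouville number is real. -/
theorem besselLiouville_is_real (ν : ℂ) (hν : ¬∃ m : ℕ, ν = -((m : ℂ) + 1))
    (M : ℝ) (hM : 0 < M)
    (hbound : ∀ a : ℂ, normalizedBessel ν a = 0 → |a.im| ≤ M)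
    (z : ℂ)
    (hnotrat : ¬∃ a b : ℂ, normalizedBessel ν a = 0 ∧ normalizedBessel ν b = 0 ∧ b ≠ 0 ∧
      z = a / b)
    (hliou : ∀ N : ℕ, ∃ a b : ℂ, normalizedBessel ν a = 0 ∧ normalizedBessel ν b = 0 ∧
      1 < ‖b‖ ∧ ‖z - a / b‖ < 1 / ‖b‖ ^ N) :
    z.im = 0 := by
  by_contra him
  have hc : 0 < |z.im| := abs_pos.2 him
  set c : ℝ := |z.im| with hc_def
  set Q : ℝ := 1 + M * (‖z‖ + 2) with hQ_def
  have hQ : 0 < Q := by positivity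
  set K : ℝ := max 1 (Q / c) with hK_def
  have hK1 : 1 ≤ K := le_max_left _ _
  -- Step 1: bounds on the approximating pairs
  have key : ∀ N : ℕ, 1 ≤ N → ∃ a b : ℂ, normalizedBessel ν a = 0 ∧ normalizedBessel ν b = 0 ∧
      1 < ‖b‖ ∧ ‖b‖ ≤ K ∧ ‖a‖ ≤ K * (‖z‖ + 1) ∧
      ‖z - a / b‖ < 1 / ‖b‖ ^ N := by
    intro N hN
    obtain ⟨a, b, ha, hb, hb1, hlt⟩ := hliou N
    have hbpos : 0 < ‖b‖ := lt_trans one_pos hb1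
    have hpow : ‖b‖ ≤ ‖b‖ ^ N := by
      calc ‖b‖ = ‖b‖ ^ 1 := (pow_one _).symm
        _ ≤ ‖b‖ ^ N := pow_le_pow_right₀ hb1.le hN
    have hlt1 : ‖z - a / b‖ < 1 / ‖b‖ :=
      lt_of_lt_of_le hlt (one_div_le_one_div_of_le hbpos hpow)
    have hltone : ‖z - a / b‖ < 1 := by
      refine lt_of_lt_of_le hlt1 ?_
      rw [div_le_one hbpos]
      exact hb1.le
    have hq : ‖a / b‖ ≤ ‖z‖ + 1 := by
      have h2 : ‖a / b‖ ≤ ‖z‖ + ‖z - a / b‖ := by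
        have h2' := norm_add_le z (-(z - a / b))
        rw [norm_neg, show z + -(z - a / b) = a / b from by ring] at h2'
        exact h2'
      linarith
    have hA : ‖a‖ ≤ ‖b‖ * (‖z‖ + 1) := by
      rw [norm_div, div_le_iff₀ hbpos] at hq
      linarith [hq]
    -- imaginary part of a/b is small
    have haIm : |a.im| ≤ M := hbound a ha
    have hbIm : |b.im| ≤ M := hbound b hb
    have hIm : |(a / b).im| ≤ M * (‖z‖ + 2) / ‖b‖ := by
      have e0 : (a / b).im = (a.im * b.re - a.re * b.im) / Complex.normSq b := by
        rw [Complex.div_im]; ring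
      have hns : Complex.normSq b = ‖b‖ ^ 2 := (Complex.sq_norm b).symm
      rw [e0, hns, abs_div, _root_.abs_of_nonneg (sq_nonneg (‖b‖))]
      have hnum : |a.im * b.re - a.re * b.im|
          ≤ M * ‖b‖ + ‖b‖ * (‖z‖ + 1) * M := by
        have t1 : |a.im * b.re - a.re * b.im| ≤ |a.im| * |b.re| + |a.re| * |b.im| := by
          calc |a.im * b.re - a.re * b.im| ≤ |a.im * b.re| + |a.re * b.im| := abs_sub _ _
            _ = |a.im| * |b.re| + |a.re| * |b.im| := by rw [abs_mul, abs_mul]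
        have t2 : |b.re| ≤ ‖b‖ := Complex.abs_re_le_norm b
        have t3 : |a.re| ≤ ‖b‖ * (‖z‖ + 1) :=
          le_trans (Complex.abs_re_le_norm a) hA
        nlinarith [abs_nonneg a.im, abs_nonneg b.re, abs_nonneg a.re, abs_nonneg b.im,
          norm_nonneg b, norm_nonneg z, hM]
      rw [div_le_div_iff₀ (by positivity) hbpos]
      nlinarith [mul_le_mul_of_nonneg_right hnum hbpos.le]
    -- conclude |b| ≤ K
    have hbK : ‖b‖ ≤ K := by
      by_contra hgt
      push_neg at hgt
      have h1 : c ≤ ‖z - a / b‖ + |(a / b).im| := by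
        have hz : z.im = (z - a / b).im + (a / b).im := by
          simp [Complex.sub_im]
        calc c = |(z - a / b).im + (a / b).im| := by rw [hc_def, hz]
          _ ≤ |(z - a / b).im| + |(a / b).im| := abs_add_le _ _
          _ ≤ ‖z - a / b‖ + |(a / b).im| := by
              gcongr
              exact Complex.abs_im_le_norm _
      have h3 : c < Q / ‖b‖ := by
        have : 1 / ‖b‖ + M * (‖z‖ + 2) / ‖b‖
            = Q / ‖b‖ := by
          rw [hQ_def]; field_simp
        linarith [hlt1, hIm]
      have h4 : Q / ‖b‖ < c := by
        rw [div_lt_iff₀ hbpos]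
        have h5 : Q / c < ‖b‖ := lt_of_le_of_lt (le_max_right _ _) hgt
        rw [div_lt_iff₀ hc] at h5
        linarith
      linarith
    refine ⟨a, b, ha, hb, hb1, hbK, ?_, hlt⟩
    calc ‖a‖ ≤ ‖b‖ * (‖z‖ + 1) := hA
      _ ≤ K * (‖z‖ + 1) := by
          apply mul_le_mul_of_nonneg_right hbK
          positivity
  -- Step 2: finiteness of the relevant zero sets
  set SA : Set ℂ := {x : ℂ | ‖x‖ ≤ K * (‖z‖ + 1) ∧ normalizedBessel ν x = 0}
    with hSA_def
  set SB : Set ℂ := {x : ℂ | ‖x‖ ≤ K ∧ normalizedBessel ν x = 0 ∧ 1 < ‖x‖}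
    with hSB_def
  have hfinA : SA.Finite := besselZerosFinite ν hν _
  have hfinB : SB.Finite := (besselZerosFinite ν hν K).subset (fun x hx => ⟨hx.1, hx.2.1⟩)
  set T : Set ℂ := (fun p : ℂ × ℂ => p.1 / p.2) '' (SA ×ˢ SB) with hT_def
  have hfinT : T.Finite := (hfinA.prod hfinB).image _
  obtain ⟨a1, b1, ha1, hb1z, hb11, hb1K, ha1K, _⟩ := key 1 le_rfl
  have hb1B : b1 ∈ SB := ⟨hb1K, hb1z, hb11⟩
  have ha1A : a1 ∈ SA := ⟨ha1K, ha1⟩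
  -- minimal modulus β of elements of SB
  have hFBne : ((hfinB.toFinset).image (‖·‖)).Nonempty :=
    ⟨‖b1‖, Finset.mem_image_of_mem _ (hfinB.mem_toFinset.2 hb1B)⟩
  set β : ℝ := ((hfinB.toFinset).image (‖·‖)).min' hFBne with hβ_def
  have hβ1 : 1 < β := by
    obtain ⟨b0, hb0, hb0eq⟩ := Finset.mem_image.1 (((hfinB.toFinset).image (‖·‖)).min'_mem hFBne)
    rw [hβ_def, ← hb0eq]
    exact (hfinB.mem_toFinset.1 hb0).2.2
  have hβle : ∀ x ∈ SB, β ≤ ‖x‖ := fun x hx =>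
    Finset.min'_le _ _ (Finset.mem_image_of_mem _ (hfinB.mem_toFinset.2 hx))
  -- minimal distance d from z to T
  have hT1 : a1 / b1 ∈ T := ⟨(a1, b1), Set.mem_prod.2 ⟨ha1A, hb1B⟩, rfl⟩
  have hFTne : ((hfinT.toFinset).image (fun w => ‖z - w‖)).Nonempty :=
    ⟨_, Finset.mem_image_of_mem _ (hfinT.mem_toFinset.2 hT1)⟩
  set d : ℝ := ((hfinT.toFinset).image (fun w => ‖z - w‖)).min' hFTne with hd_def
  have hd0 : 0 < d := by
    obtain ⟨w, hw, hweq⟩ := Finset.mem_image.1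
      (((hfinT.toFinset).image (fun w => ‖z - w‖)).min'_mem hFTne)
    rw [hd_def, ← hweq]
    obtain ⟨⟨a, b⟩, hp, rfl⟩ := hfinT.mem_toFinset.1 hw
    have hpA : a ∈ SA := (Set.mem_prod.1 hp).1
    have hpB : b ∈ SB := (Set.mem_prod.1 hp).2
    have hbne : b ≠ 0 := by
      intro h0
      have h1b := hpB.2.2
      rw [h0] at h1b
      simp only [norm_zero] at h1b
      linarith
    have hzne : z ≠ a / b := fun h => hnotrat ⟨a, b, hpA.2, hpB.2.1, hbne, h⟩
    exact norm_pos_iff.mpr (sub_ne_zero.2 hzne)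
  have hdle : ∀ w ∈ T, d ≤ ‖z - w‖ := fun w hw =>
    Finset.min'_le _ _ (Finset.mem_image_of_mem _ (hfinT.mem_toFinset.2 hw))
  -- Step 3: choose N large and derive a contradiction
  obtain ⟨n, hn⟩ := pow_unbounded_of_one_lt (1 / d) hβ1
  obtain ⟨a, b, ha, hb, hbgt1, hbK, haK, hlt⟩ := key (max n 1) (le_max_right _ _)
  have hbB : b ∈ SB := ⟨hbK, hb, hbgt1⟩
  have hTab : a / b ∈ T := ⟨(a, b), Set.mem_prod.2 ⟨⟨haK, ha⟩, hbB⟩, rfl⟩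
  have h1 : d ≤ ‖z - a / b‖ := hdle _ hTab
  have hβN : 1 / d < β ^ max n 1 :=
    lt_of_lt_of_le hn (pow_le_pow_right₀ hβ1.le (le_max_left _ _))
  have hβpos : (0 : ℝ) < β := lt_trans one_pos hβ1
  have h2 : 1 / ‖b‖ ^ max n 1 ≤ 1 / β ^ max n 1 := by
    apply one_div_le_one_div_of_le (by positivity)
    exact pow_le_pow_left₀ hβpos.le (hβle b hbB) _
  have h3 : 1 / β ^ max n 1 < d := by
    rw [div_lt_iff₀ (by positivity)]
    rw [div_lt_iff₀ hd0] at hβN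
    linarith
  linarith
end

section
/- The reciprocal of a j_ν-Liouville number is j_ν-Liouville: if x ≠ 0 is j_ν-Liouville, then so is 1/x. -/
open Complex Filter Topology Set

/-- The set of positive zeros of `j_ν` for real `ν`. -/
noncomputable def besselZeros (ν : ℝ) : Set ℝ :=
  {x : ℝ | 0 < x ∧ normalizedBessel (ν : ℂ) (x : ℂ) = 0}

/-- `x` is a ratio of two elements of `Z`. -/
def ZRational (Z : Set ℝ) (x : ℝ) : Prop := ∃ a ∈ Z, ∃ b ∈ Z, x = a / b

/-- `x` is `Z`-Liouville: not `Z`-rational, but approximable to any order by `Z`-ratios. -/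
def ZLiouville (Z : Set ℝ) (x : ℝ) : Prop :=
  ¬ZRational Z x ∧ ∀ N : ℕ, ∃ a ∈ Z, ∃ b ∈ Z, 1 < b ∧ |x - a / b| < 1 / b ^ N



noncomputable def bc (ν : ℝ) (k : ℕ) : ℂ :=
  (-1) ^ k / ((k.factorial : ℂ) * Complex.Gamma ((k : ℂ) + ν + 1))

lemma gamma_ne (ν : ℝ) (hν : -1 < ν) (k : ℕ) : Complex.Gamma ((k : ℂ) + ν + 1) ≠ 0 := by
  apply Complex.Gamma_ne_zero
  intro m hEq
  have := congrArg Complex.re hEq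
  simp at this
  have hk : (0:ℝ) ≤ (k:ℝ) := Nat.cast_nonneg k
  have hm : (0:ℝ) ≤ (m:ℝ) := Nat.cast_nonneg m
  linarith

lemma bc_ne (ν : ℝ) (hν : -1 < ν) (k : ℕ) : bc ν k ≠ 0 := by
  apply div_ne_zero
  · exact pow_ne_zero _ (by norm_num)
  · exact mul_ne_zero (Nat.cast_ne_zero.2 k.factorial_ne_zero) (gamma_ne ν hν k)

lemma bc_norm (ν : ℝ) (k : ℕ) :
    ‖bc ν k‖ = ((k.factorial : ℝ) * ‖Complex.Gamma ((k : ℂ) + ν + 1)‖)⁻¹ := by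
  rw [bc, norm_div, norm_pow, norm_neg, norm_one, one_pow, norm_mul, one_div]
  norm_num

lemma bc_norm_succ (ν : ℝ) (hν : -1 < ν) (n : ℕ) :
    ‖bc ν (n + 1)‖ = (((n:ℝ) + 1) * ‖(n : ℂ) + ν + 1‖)⁻¹ * ‖bc ν n‖ := by
  have hG : Complex.Gamma (((n+1 : ℕ) : ℂ) + ν + 1)
      = ((n : ℂ) + ν + 1) * Complex.Gamma ((n : ℂ) + ν + 1) := by
    have h : (((n+1 : ℕ) : ℂ) + ν + 1) = ((n : ℂ) + ν + 1) + 1 := by push_cast; ring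
    rw [h, Complex.Gamma_add_one]
    intro h0
    have := congrArg Complex.re h0
    simp at this
    have hk : (0:ℝ) ≤ (n:ℝ) := Nat.cast_nonneg n
    linarith
  rw [bc_norm, bc_norm, hG, norm_mul, Nat.factorial_succ]
  push_cast
  rw [← mul_inv]
  congr 1
  ring

lemma bc_ratio (ν : ℝ) (hν : -1 < ν) (n : ℕ) :
    ‖bc ν (n + 1)‖ / ‖bc ν n‖ = (((n:ℝ) + 1) * ‖(n : ℂ) + ν + 1‖)⁻¹ := by
  rw [bc_norm_succ ν hν n, mul_div_assoc, div_self (norm_pos_iff.2 (bc_ne ν hν n)).ne', mul_one]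

lemma bc_radius (ν : ℝ) (hν : -1 < ν) :
    (FormalMultilinearSeries.ofScalars ℂ (bc ν)).radius = ⊤ := by
  apply FormalMultilinearSeries.ofScalars_radius_eq_top_of_tendsto
  · exact Eventually.of_forall fun n => bc_ne ν hν n
  · have h : Tendsto (fun n : ℕ => ((n:ℝ) + 1) * ‖(n : ℂ) + ν + 1‖) atTop atTop := by
      apply tendsto_atTop_mono' _ _ tendsto_natCast_atTop_atTop
      filter_upwards [eventually_ge_atTop 1] with n hn
      have h1 : ((n:ℝ)) + ν + 1 ≤ ‖(n : ℂ) + ν + 1‖ := by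
        have : ((n:ℝ)) + ν + 1 = ((n : ℂ) + ν + 1).re := by simp
        rw [this]
        exact Complex.re_le_norm _
      have hn1 : (1:ℝ) ≤ (n:ℝ) := by exact_mod_cast hn
      nlinarith [norm_nonneg ((n : ℂ) + ν + 1)]
    have := h.inv_tendsto_atTop
    apply Tendsto.congr' _ this
    filter_upwards with n
    exact (bc_ratio ν hν n).symm

lemma normalizedBessel_eq (ν : ℝ) (z : ℂ) :
    normalizedBessel (ν : ℂ) z
      = FormalMultilinearSeries.ofScalarsSum (E := ℂ) (bc ν) ((z / 2) ^ 2) := by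
  rw [FormalMultilinearSeries.ofScalars_sum_eq, normalizedBessel]
  apply tsum_congr
  intro k
  rw [smul_eq_mul, bc, ← pow_mul]

lemma normalizedBessel_analytic (ν : ℝ) (hν : -1 < ν) (w : ℂ) :
    AnalyticAt ℂ (normalizedBessel (ν : ℂ)) w := by
  have hball : HasFPowerSeriesOnBall (FormalMultilinearSeries.ofScalars ℂ (bc ν)).sum
      (FormalMultilinearSeries.ofScalars ℂ (bc ν)) 0
      (FormalMultilinearSeries.ofScalars ℂ (bc ν)).radius :=
    FormalMultilinearSeries.hasFPowerSeriesOnBall _ (by rw [bc_radius ν hν]; exact ENNReal.zero_lt_top)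
  have hsum : ∀ u : ℂ, AnalyticAt ℂ (FormalMultilinearSeries.ofScalars ℂ (bc ν)).sum u := by
    intro u
    apply hball.analyticAt_of_mem
    rw [bc_radius ν hν]
    simp [EMetric.mem_ball, edist_lt_top]
  have hcomp : AnalyticAt ℂ (fun z : ℂ => (z / 2) ^ 2) w := by
    apply AnalyticAt.pow
    exact analyticAt_id.div analyticAt_const (by norm_num)
  have := AnalyticAt.comp (f := fun z : ℂ => (z / 2) ^ 2) (hsum ((w / 2) ^ 2)) hcomp
  apply this.congr
  filter_upwards with z
  exact (normalizedBessel_eq ν z).symm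

lemma normalizedBessel_zero_ne (ν : ℝ) (hν : -1 < ν) :
    normalizedBessel (ν : ℂ) 0 ≠ 0 := by
  have h : normalizedBessel (ν : ℂ) 0 = bc ν 0 := by
    rw [normalizedBessel]
    rw [tsum_eq_single 0]
    · simp [bc]
    · intro k hk
      rw [zero_div, zero_pow (by omega : 2 * k ≠ 0), mul_zero]
  rw [h]
  exact bc_ne ν hν 0

lemma besselZeros_finite_le (ν : ℝ) (hν : -1 < ν) (T : ℝ) :
    {b : ℝ | b ∈ besselZeros ν ∧ b ≤ T}.Finite := by
  by_contra hinf
  have hinf' : {b : ℝ | b ∈ besselZeros ν ∧ b ≤ T}.Infinite := hinf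
  have hsub : {b : ℝ | b ∈ besselZeros ν ∧ b ≤ T} ⊆ Set.Icc 0 T := by
    rintro b ⟨⟨hb0, _⟩, hbT⟩
    exact ⟨hb0.le, hbT⟩
  obtain ⟨x₀, _, hacc⟩ := hinf'.exists_accPt_of_subset_isCompact isCompact_Icc hsub
  rw [accPt_iff_frequently] at hacc
  have hfreq : ∃ᶠ y : ℝ in 𝓝[≠] x₀, normalizedBessel (ν : ℂ) (Complex.ofReal y) = 0 := by
    rw [frequently_nhdsWithin_iff]
    apply (hacc.mono ?_)
    rintro y ⟨hy, hyz, _⟩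
    exact ⟨hyz.2, hy⟩
  have hmap : Tendsto (fun t : ℝ => (t : ℂ)) (𝓝[≠] x₀) (𝓝[≠] (x₀ : ℂ)) := by
    rw [tendsto_nhdsWithin_iff]
    constructor
    · exact Complex.continuous_ofReal.continuousAt.tendsto.mono_left nhdsWithin_le_nhds
    · filter_upwards [self_mem_nhdsWithin] with y hy
      simpa using fun hc => hy (Complex.ofReal_injective hc)
  have hfreqC : ∃ᶠ w in 𝓝[≠] (x₀ : ℂ), normalizedBessel (ν : ℂ) w = 0 :=
    hmap.frequently hfreq
  have hAnal : AnalyticOnNhd ℂ (normalizedBessel (ν : ℂ)) Set.univ :=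
    fun w _ => normalizedBessel_analytic ν hν w
  have hz : Set.EqOn (normalizedBessel (ν : ℂ)) 0 Set.univ :=
    hAnal.eqOn_zero_of_preconnected_of_frequently_eq_zero isPreconnected_univ
      (Set.mem_univ _) hfreqC
  exact normalizedBessel_zero_ne ν hν (hz (Set.mem_univ 0))

theorem main (Z : Set ℝ) (hZpos : ∀ b ∈ Z, 0 < b)
    (hfin : ∀ T : ℝ, {b : ℝ | b ∈ Z ∧ b ≤ T}.Finite)
    (x : ℝ) (hx : x ≠ 0) (h : ZLiouville Z x) : ZLiouville Z (1 / x) := by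
  obtain ⟨hirr, happ⟩ := h
  -- Key claim: witnesses with arbitrarily large denominators
  have key : ∀ T : ℝ, ∀ M : ℕ, ∃ a ∈ Z, ∃ b ∈ Z, 1 < b ∧ T < b ∧ |x - a / b| < 1 / b ^ M := by
    intro T M
    set F : Set ℝ := {b : ℝ | b ∈ Z ∧ 1 < b ∧ b ≤ T} with hF
    have hFfin : F.Finite := (hfin T).subset (fun b hb => ⟨hb.1, hb.2.2⟩)
    by_cases hne : F.Nonempty
    · obtain ⟨β, hβF, hβmin⟩ := Set.exists_min_image F id hFfin hne
      have hβ1 : 1 < β := hβF.2.1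
      set G : Set ℝ := {a : ℝ | a ∈ Z ∧ a ≤ T * (|x| + 1)} with hG
      have hGfin : G.Finite := (hfin (T * (|x| + 1))).subset (fun a ha => ⟨ha.1, ha.2⟩)
      set D : Set ℝ := Set.image2 (fun a b => a / b) G F with hD
      have hDfin : D.Finite := Set.Finite.image2 _ hGfin hFfin
      have hxD : x ∉ D := by
        rintro ⟨a, ha, b, hb, hab⟩
        exact hirr ⟨a, ha.1, b, hb.1, hab.symm⟩
      obtain ⟨ε, hε, hball⟩ := Metric.isOpen_iff.1 hDfin.isClosed.isOpen_compl x hxD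
      obtain ⟨n, hn⟩ := pow_unbounded_of_one_lt (1 / ε) hβ1
      set M' : ℕ := max n (max M 1) with hM'
      obtain ⟨a, haZ, b, hbZ, hb1, habs⟩ := happ M'
      have hb0 : (0 : ℝ) < b := hZpos b hbZ
      have hbM : 1 / b ^ M' ≤ 1 / b ^ M := by
        apply one_div_le_one_div_of_le (by positivity)
        exact pow_le_pow_right₀ hb1.le (le_max_of_le_right (le_max_left M 1))
      refine ⟨a, haZ, b, hbZ, hb1, ?_, lt_of_lt_of_le habs hbM⟩
      by_contra hbT
      push_neg at hbT
      have hbF : b ∈ F := ⟨hbZ, hb1, hbT⟩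
      -- a ∈ G
      have hb1' : 1 / b ^ M' ≤ 1 / b := by
        apply one_div_le_one_div_of_le hb0
        calc b = b ^ 1 := (pow_one b).symm
        _ ≤ b ^ M' := pow_le_pow_right₀ hb1.le (le_max_of_le_right (le_max_right M 1))
      have hblt1 : 1 / b < 1 := by
        rw [div_lt_one hb0]; exact hb1
      have habs1 : |x - a / b| < 1 := lt_of_lt_of_le habs (hb1'.trans hblt1.le)
      have haG : a ∈ G := by
        refine ⟨haZ, ?_⟩
        have h1 : a / b - x ≤ |x - a / b| := by
          rw [abs_sub_comm]; exact le_abs_self _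
        have h2 : a / b < |x| + 1 := by
          have := le_abs_self x
          linarith
        have h3 : a < b * (|x| + 1) := by
          rw [div_lt_iff₀ hb0] at h2
          linarith [h2]
        have h4 : b * (|x| + 1) ≤ T * (|x| + 1) := by
          apply mul_le_mul_of_nonneg_right hbT
          positivity
        linarith
      have hmem : a / b ∈ D := Set.mem_image2_of_mem haG hbF
      have hdist : ε ≤ |x - a / b| := by
        by_contra hcon
        push_neg at hcon
        have : a / b ∈ Metric.ball x ε := by
          rw [Metric.mem_ball, Real.dist_eq, abs_sub_comm]
          exact hcon
        exact hball this hmem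
      -- but |x - a/b| < 1/b^M' ≤ 1/β^M' ≤ 1/β^n < ε
      have hβb : β ≤ b := hβmin b hbF
      have hβ0 : (0:ℝ) < β := lt_trans one_pos hβ1
      have c1 : 1 / b ^ M' ≤ 1 / β ^ M' := by
        apply one_div_le_one_div_of_le (by positivity)
        exact pow_le_pow_left₀ hβ0.le hβb M'
      have c2 : 1 / β ^ M' ≤ 1 / β ^ n := by
        apply one_div_le_one_div_of_le (by positivity)
        exact pow_le_pow_right₀ hβ1.le (le_max_left n _)
      have c3 : 1 / β ^ n < ε := by
        rw [div_lt_iff₀ (by positivity)]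
        rw [div_lt_iff₀ hε] at hn
        linarith [hn]
      linarith [habs, hdist, c1, c2, c3]
    · -- F empty: any witness with b > 1 has b > T
      obtain ⟨a, haZ, b, hbZ, hb1, habs⟩ := happ M
      refine ⟨a, haZ, b, hbZ, hb1, ?_, habs⟩
      by_contra hbT
      push_neg at hbT
      exact hne ⟨b, hbZ, hb1, hbT⟩
  -- x is positive
  have hxpos : 0 < x := by
    rcases lt_or_gt_of_ne hx with hneg | hpos
    · exfalso
      obtain ⟨a, haZ, b, hbZ, hb1, hbT, habs⟩ := key (1 / (-x)) 1
      have ha0 : 0 < a := hZpos a haZ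
      have hb0 : 0 < b := hZpos b hbZ
      have h1 : 1 / b < -x := by
        rw [div_lt_iff₀ (by linarith : (0:ℝ) < -x)] at hbT
        rw [div_lt_iff₀ hb0]
        nlinarith [hbT]
      have h2 : -x ≤ |x - a / b| := by
        have : 0 < a / b := div_pos ha0 hb0
        rw [abs_of_nonpos (by nlinarith : x - a / b ≤ 0)]
        linarith
      rw [pow_one] at habs
      linarith
    · exact hpos
  constructor
  · rintro ⟨a, haZ, b, hbZ, hab⟩
    have ha0 : 0 < a := hZpos a haZ
    have hb0 : 0 < b := hZpos b hbZ
    apply hirr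
    refine ⟨b, hbZ, a, haZ, ?_⟩
    rw [eq_comm, div_eq_iff (ne_of_gt ha0)]
    have : (1 / x) * (x * b) = (a / b) * (x * b) := by rw [hab]
    field_simp at this ⊢
    nlinarith [this]
  · intro N
    set T : ℝ := max (2 / x) (2 * (3 * x / 2) ^ N / x ^ 2) with hT
    obtain ⟨a, haZ, b, hbZ, hb1, hbT, habs⟩ := key T (N + 1)
    have ha0 : 0 < a := hZpos a haZ
    have hb0 : 0 < b := hZpos b hbZ
    have hTb1 : 2 / x < b := lt_of_le_of_lt (le_max_left _ _) hbT
    have hTb2 : 2 * (3 * x / 2) ^ N / x ^ 2 < b := lt_of_le_of_lt (le_max_right _ _) hbT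
    -- 1/b^(N+1) ≤ 1/b < x/2
    have hbpow : 1 / b ^ (N + 1) ≤ 1 / b := by
      apply one_div_le_one_div_of_le hb0
      calc b = b ^ 1 := (pow_one b).symm
      _ ≤ b ^ (N + 1) := pow_le_pow_right₀ hb1.le (by omega)
    have hbx : 1 / b < x / 2 := by
      rw [div_lt_div_iff₀ hb0 (by norm_num : (0:ℝ) < 2)]
      rw [div_lt_iff₀ hxpos] at hTb1
      linarith
    have habs' : |x - a / b| < x / 2 := lt_of_lt_of_le habs hbpow |>.trans hbx
    have hablb : x / 2 < a / b := by
      have := abs_lt.1 habs'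
      linarith [this.1, this.2]
    have habub : a / b < 3 * x / 2 := by
      have := abs_lt.1 habs'
      linarith [this.1, this.2]
    have halb : b * x / 2 < a := by
      rw [div_lt_div_iff₀ (by norm_num : (0:ℝ) < 2) hb0] at hablb
      linarith
    have ha1 : 1 < a := by
      have : 2 / x * x / 2 ≤ b * x / 2 := by
        apply div_le_div_of_nonneg_right _ (by norm_num)
        exact mul_le_mul_of_nonneg_right hTb1.le hxpos.le
      have h2x : 2 / x * x / 2 = 1 := by field_simp
      linarith
    have hapow : (3 * x / 2) ^ N < x * a := by
      have h1 : 2 * (3 * x / 2) ^ N / x ^ 2 * (x / 2) < b * (x / 2) :=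
        mul_lt_mul_of_pos_right hTb2 (by positivity)
      have h2 : 2 * (3 * x / 2) ^ N / x ^ 2 * (x / 2) = (3 * x / 2) ^ N / x := by
        field_simp
      have h3 : (3 * x / 2) ^ N / x < a := by
        rw [h2] at h1
        have : b * (x / 2) = b * x / 2 := by ring
        linarith [h1, halb]
      rw [div_lt_iff₀ hxpos] at h3
      linarith [h3]
    refine ⟨b, hbZ, a, haZ, ha1, ?_⟩
    have heq : 1 / x - b / a = (b / (x * a)) * (a / b - x) := by
      field_simp
    have habs2 : |1 / x - b / a| = (b / (x * a)) * |x - a / b| := by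
      rw [heq, abs_mul, abs_of_pos (by positivity : (0:ℝ) < b / (x * a)), abs_sub_comm]
    have hlt1 : |1 / x - b / a| < (b / (x * a)) * (1 / b ^ (N + 1)) := by
      rw [habs2]
      exact mul_lt_mul_of_pos_left habs (by positivity)
    have heq2 : (b / (x * a)) * (1 / b ^ (N + 1)) = 1 / (x * a * b ^ N) := by
      rw [pow_succ]
      field_simp
    have hlt2 : 1 / (x * a * b ^ N) < 1 / a ^ N := by
      apply one_div_lt_one_div_of_lt (by positivity)
      have hpow : (a / b) ^ N ≤ (3 * x / 2) ^ N :=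
        pow_le_pow_left₀ (by positivity) habub.le N
      have : a ^ N / b ^ N < x * a := by
        rw [← div_pow]
        exact lt_of_le_of_lt hpow hapow
      rw [div_lt_iff₀ (by positivity : (0:ℝ) < b ^ N)] at this
      linarith [this]
    calc |1 / x - b / a| < (b / (x * a)) * (1 / b ^ (N + 1)) := hlt1
    _ = 1 / (x * a * b ^ N) := heq2
    _ < 1 / a ^ N := hlt2

/-- The reciprocal of a `j_ν`-Liouville number is `j_ν`-Liouville. -/
theorem besselLiouville_inv (ν : ℝ) (hν : -1 < ν) (x : ℝ) (hx : x ≠ 0)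
    (h : ZLiouville (besselZeros ν) x) : ZLiouville (besselZeros ν) (1 / x) := by
  exact main (besselZeros ν) (fun b hb => hb.1) (besselZeros_finite_le ν hν) x hx h
end

section
/- Let Z ⊂ ℝ be a set of real numbers and r, s > 0 with r ≠ s. Suppose there exists a positive integer M such that |r/s - a/b| ≥ |b|^{-M} for all a, b ∈ Z with |b| > 1, and suppose there exists R > 0 such that every real x with |x| > R is within distance 2π/s of some point of (1/s)Z with the corresponding b satisfying |b| ≤ s|x| + 2π. Then there exist C > 0 and a positive integer N such that for all x ∈ ℝ and all a, b ∈ Z with |b|>1: |x - a/r| + |x - b/s| ≥ C(1 + |x|)^{-N}. -/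
open Real

set_option maxHeartbeats 1000000 in
/-- Diophantine lower bound for distances to rescaled zero sets. -/
theorem nearest_zero_estimate (Z : Set ℝ) (r s : ℝ) (hr : 0 < r) (hs : 0 < s) (hrs : r ≠ s)
    (M : ℕ) (hM : 0 < M)
    (hdioph : ∀ a ∈ Z, ∀ b ∈ Z, 1 < |b| → |b| ^ (-(M : ℤ)) ≤ |r / s - a / b|)
    (R : ℝ) (hR : 0 < R)
    (hnear : ∀ x : ℝ, R < |x| → ∃ b ∈ Z, |x - b / s| ≤ 2 * π / s ∧ |b| ≤ s * |x| + 2 * π) :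
    ∃ C : ℝ, 0 < C ∧ ∃ N : ℕ, 0 < N ∧
      ∀ x : ℝ, ∀ a ∈ Z, ∀ b ∈ Z, 1 < |b| →
        C * (1 + |x|) ^ (-(N : ℤ)) ≤ |x - a / r| + |x - b / s| := by
  set K := max s 1 with hKdef
  have hK1 : (1:ℝ) ≤ K := le_max_right _ _
  have hK0 : (0:ℝ) < K := lt_of_lt_of_le one_pos hK1
  have hKs : s ≤ K := le_max_left _ _
  refine ⟨min 1 (1 / (r * K ^ M)), by positivity, M, hM, ?_⟩
  intro x a ha b hb hb1
  have hb0 : (0:ℝ) < |b| := lt_trans one_pos hb1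
  have hbne : b ≠ 0 := by
    intro h; rw [h, abs_zero] at hb0; exact lt_irrefl _ hb0
  have hx1 : (1:ℝ) ≤ 1 + |x| := le_add_of_nonneg_right (abs_nonneg x)
  have hx0 : (0:ℝ) < 1 + |x| := lt_of_lt_of_le one_pos hx1
  have hxpow : (1 + |x|) ^ (-(M:ℤ)) = ((1 + |x|) ^ M)⁻¹ := by
    rw [zpow_neg, zpow_natCast]
  have hpow1 : (1:ℝ) ≤ (1 + |x|) ^ M := one_le_pow₀ hx1
  set D := |x - a / r| + |x - b / s| with hD
  have hD0 : (0:ℝ) ≤ D := by positivity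
  have hmin1 : min 1 (1 / (r * K ^ M)) ≤ 1 := min_le_left _ _
  have hmin2 : min 1 (1 / (r * K ^ M)) ≤ 1 / (r * K ^ M) := min_le_right _ _
  by_cases hcase : 1 ≤ D
  · calc min 1 (1 / (r * K ^ M)) * (1 + |x|) ^ (-(M:ℤ))
        ≤ 1 * 1 := by
          apply mul_le_mul hmin1 _ (by positivity) one_pos.le
          rw [hxpow]
          exact inv_le_one_of_one_le₀ hpow1
      _ ≤ D := by linarith
  · push_neg at hcase
    -- bound |b|
    have hbbound : |b| ≤ K * (1 + |x|) := by
      have h1 : |x - b / s| ≤ D := by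
        rw [hD]; nlinarith [abs_nonneg (x - a / r)]
      have h2 : |b / s| ≤ |x| + D := by
        have := abs_sub_abs_le_abs_sub (b / s) x
        rw [abs_sub_comm] at this
        linarith
      have h3 : |b| = s * |b / s| := by
        rw [abs_div, abs_of_pos hs]; field_simp
      calc |b| = s * |b / s| := h3
        _ ≤ s * (|x| + D) := by nlinarith
        _ ≤ s * (1 + |x|) := by nlinarith
        _ ≤ K * (1 + |x|) := by nlinarith
    -- diophantine step
    have heq : r / s - a / b = (r / b) * (b / s - a / r) := by
      field_simp
    have habs : |r / s - a / b| = (r / |b|) * |b / s - a / r| := by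
      rw [heq, abs_mul, abs_div, abs_of_pos hr]
    have hab : |b / s - a / r| ≤ D := by
      have h : b / s - a / r = (x - a / r) - (x - b / s) := by ring
      rw [h]
      exact abs_sub _ _
    have hdio := hdioph a ha b hb hb1
    rw [habs] at hdio
    have hzpow : |b| ^ (-(M:ℤ)) = (|b| ^ M)⁻¹ := by rw [zpow_neg, zpow_natCast]
    rw [hzpow] at hdio
    have hbpow : (0:ℝ) < |b| ^ M := by positivity
    have hkey : 1 ≤ r * |b| ^ (M - 1) * D := by
      have h4 : (|b| ^ M)⁻¹ ≤ (r / |b|) * D := by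
        calc (|b| ^ M)⁻¹ ≤ (r / |b|) * |b / s - a / r| := hdio
          _ ≤ (r / |b|) * D := by
            apply mul_le_mul_of_nonneg_left hab (by positivity)
      have h5 : |b| ^ M = |b| * |b| ^ (M - 1) := by
        rw [← pow_succ']
        congr 1
        omega
      have h6 := mul_le_mul_of_nonneg_left h4 hbpow.le
      rw [mul_inv_cancel₀ hbpow.ne'] at h6
      calc (1:ℝ) ≤ |b| ^ M * ((r / |b|) * D) := h6
        _ = r * |b| ^ (M - 1) * D := by
          rw [h5]; field_simp
    -- bound |b|^(M-1) ≤ K^M * (1+|x|)^M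
    have hbig : |b| ^ (M - 1) ≤ K ^ M * (1 + |x|) ^ M := by
      calc |b| ^ (M - 1) ≤ (K * (1 + |x|)) ^ (M - 1) :=
            pow_le_pow_left₀ hb0.le hbbound _
        _ = K ^ (M - 1) * (1 + |x|) ^ (M - 1) := mul_pow _ _ _
        _ ≤ K ^ M * (1 + |x|) ^ M := by
            apply mul_le_mul (pow_le_pow_right₀ hK1 (Nat.sub_le M 1))
              (pow_le_pow_right₀ hx1 (Nat.sub_le M 1)) (by positivity) (by positivity)
    have hfinal : 1 ≤ r * K ^ M * (1 + |x|) ^ M * D := by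
      calc (1:ℝ) ≤ r * |b| ^ (M - 1) * D := hkey
        _ ≤ r * (K ^ M * (1 + |x|) ^ M) * D := by
            apply mul_le_mul_of_nonneg_right _ hD0
            exact mul_le_mul_of_nonneg_left hbig hr.le
        _ = r * K ^ M * (1 + |x|) ^ M * D := by ring
    rw [hxpow]
    have hP : (0:ℝ) < (1 + |x|) ^ M := pow_pos hx0 M
    have h7 := mul_le_mul_of_nonneg_left hfinal (inv_nonneg.mpr hP.le)
    rw [mul_one] at h7
    have h8 : ((1 + |x|) ^ M)⁻¹ * (r * K ^ M * (1 + |x|) ^ M * D) = r * K ^ M * D := by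
      rw [show r * K ^ M * (1 + |x|) ^ M * D = (1 + |x|) ^ M * (r * K ^ M * D) by ring,
        ← mul_assoc, inv_mul_cancel₀ hP.ne', one_mul]
    have h9 : (1 / (r * K ^ M)) * ((1 + |x|) ^ M)⁻¹ ≤ D := by
      rw [div_mul_eq_mul_div, one_mul, div_le_iff₀ (by positivity : (0:ℝ) < r * K ^ M)]
      nlinarith [h7, h8]
    calc min 1 (1 / (r * K ^ M)) * ((1 + |x|) ^ M)⁻¹
        ≤ (1 / (r * K ^ M)) * ((1 + |x|) ^ M)⁻¹ :=
          mul_le_mul_of_nonneg_right hmin2 (by positivity)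
      _ ≤ D := h9
end

section
/- The set of j_ν-Liouville numbers has Lebesgue measure zero: if Z = {a_m} is a strictly increasing sequence of reals with a_1 > 1 and a_m ≍ m, then the set of real numbers y such that for every p ∈ ℕ there exist indices ℓ, n with |y - a_ℓ/a_n| ≤ a_n^{-p} and y not of the form a_ℓ/a_n, has Lebesgue measure zero. -/
open MeasureTheory ENNReal

/-- The set of `Z`-Liouville numbers has Lebesgue measure zero. -/
theorem liouville_set_measure_zero (a : ℕ → ℝ) (c C : ℝ) (hc : 0 < c) (hcC : c ≤ C)
    (hmono : StrictMono a) (h1 : 1 < a 1)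
    (hlin : ∀ m, 1 ≤ m → c * m ≤ a m ∧ a m ≤ C * m) :
    volume {y : ℝ |
      (∀ ℓ n : ℕ, 1 ≤ ℓ → 1 ≤ n → y ≠ a ℓ / a n) ∧
      ∀ p : ℕ, ∃ ℓ n : ℕ, 1 ≤ ℓ ∧ 1 ≤ n ∧ |y - a ℓ / a n| ≤ (a n) ^ (-(p : ℤ))} = 0 := by
  set S : Set ℝ := {y : ℝ |
      (∀ ℓ n : ℕ, 1 ≤ ℓ → 1 ≤ n → y ≠ a ℓ / a n) ∧
      ∀ p : ℕ, ∃ ℓ n : ℕ, 1 ≤ ℓ ∧ 1 ≤ n ∧ |y - a ℓ / a n| ≤ (a n) ^ (-(p : ℤ))} with hS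
  have ha1pos : (0:ℝ) < a 1 := lt_trans zero_lt_one h1
  have hapos : ∀ m, 1 ≤ m → 0 < a m := fun m hm =>
    lt_of_lt_of_le ha1pos (hmono.monotone hm)
  have ha1le : ∀ m, 1 ≤ m → a 1 ≤ a m := fun m hm => hmono.monotone hm
  have hCpos : (0:ℝ) < C := lt_of_lt_of_le hc hcC
  suffices h : ∀ K : ℕ, volume (S ∩ Set.Icc (-(K:ℝ)) K) = 0 by
    have hsub : S ⊆ ⋃ K : ℕ, S ∩ Set.Icc (-(K:ℝ)) K := by
      intro y hy
      exact Set.mem_iUnion.2 ⟨⌈|y|⌉₊, hy, Set.mem_Icc.2 (abs_le.1 (Nat.le_ceil |y|))⟩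
    exact measure_mono_null hsub (measure_iUnion_null h)
  intro K
  -- constants
  set M : ℕ := ⌈((K:ℝ)+1)*C/c⌉₊ with hM
  -- For each q, cover the set by closed balls
  set T : ℝ := ∑' n : ℕ, (((n:ℝ))^2)⁻¹ with hT
  have hTsum : Summable (fun n : ℕ => (((n:ℝ))^2)⁻¹) := by
    have := Real.summable_nat_pow_inv.2 (by norm_num : 1 < 2)
    simpa using this
  have key : ∀ q : ℕ, volume (S ∩ Set.Icc (-(K:ℝ)) K) ≤
      ENNReal.ofReal ((2*M*(c⁻¹)^3*T) * ((a 1)⁻¹)^q) := by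
    intro q
    set R : ℕ → ℝ := fun n => (a n) ^ (-((q+3 : ℕ) : ℤ)) with hR
    have hRpos : ∀ n, 1 ≤ n → 0 < R n := fun n hn => by
      have := hapos n hn
      positivity
    have hRle1 : ∀ n, 1 ≤ n → R n ≤ 1 := by
      intro n hn
      rw [hR]
      simp only [zpow_neg, zpow_natCast]
      rw [inv_le_one_iff₀]
      right
      exact one_le_pow₀ (le_trans h1.le (ha1le n hn))
    -- covering
    have hcover : S ∩ Set.Icc (-(K:ℝ)) K ⊆
        ⋃ n : ℕ, ⋃ ℓ ∈ Finset.Icc 1 (M*n), Metric.closedBall (a ℓ / a n) (R n) := by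
      rintro y ⟨hyS, hyI⟩
      obtain ⟨ℓ, n, hℓ, hn, happ⟩ := hyS.2 (q+3)
      have hanpos := hapos n hn
      have haℓpos := hapos ℓ hℓ
      -- bound ℓ ≤ M * n
      have hdivle : a ℓ / a n ≤ (K:ℝ) + 1 := by
        have habs := abs_le.1 happ
        have := hRle1 n hn
        have hyK : y ≤ (K:ℝ) := hyI.2
        linarith [habs.1, habs.2]
      have haℓle : a ℓ ≤ ((K:ℝ)+1) * a n := by
        rw [div_le_iff₀ hanpos] at hdivle
        exact hdivle
      have hℓle : ℓ ≤ M * n := by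
        have h2 : c * ℓ ≤ a ℓ := (hlin ℓ hℓ).1
        have h3 : a n ≤ C * n := (hlin n hn).2
        have h4 : ((K:ℝ)+1) * a n ≤ ((K:ℝ)+1) * (C * n) :=
          mul_le_mul_of_nonneg_left h3 (by positivity)
        have h5 : ((K:ℝ)+1)*C/c ≤ (M:ℝ) := Nat.le_ceil _
        have h6 : ((K:ℝ)+1)*C ≤ c * M := by
          rw [div_le_iff₀ hc] at h5; linarith
        have h7 : c * ℓ ≤ c * (M * n) := by
          calc c * (ℓ:ℝ) ≤ ((K:ℝ)+1) * (C * n) := by linarith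
          _ = (((K:ℝ)+1) * C) * n := by ring
          _ ≤ (c * M) * n := mul_le_mul_of_nonneg_right h6 (by positivity)
          _ = c * (M * n) := by ring
        have h8 : (ℓ:ℝ) ≤ (M:ℝ) * n := le_of_mul_le_mul_left h7 hc
        exact_mod_cast (by push_cast; exact h8 : (ℓ:ℝ) ≤ ((M*n : ℕ) : ℝ))
      refine Set.mem_iUnion.2 ⟨n, Set.mem_iUnion₂.2 ⟨ℓ, Finset.mem_Icc.2 ⟨hℓ, hℓle⟩, ?_⟩⟩
      rw [Metric.mem_closedBall, Real.dist_eq]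
      exact happ
    -- measure bound
    have step1 : volume (S ∩ Set.Icc (-(K:ℝ)) K) ≤
        ∑' n : ℕ, ((M*n : ℕ) : ℝ≥0∞) * ENNReal.ofReal (2 * R n) := by
      calc volume (S ∩ Set.Icc (-(K:ℝ)) K)
          ≤ volume (⋃ n : ℕ, ⋃ ℓ ∈ Finset.Icc 1 (M*n),
              Metric.closedBall (a ℓ / a n) (R n)) := measure_mono hcover
        _ ≤ ∑' n : ℕ, volume (⋃ ℓ ∈ Finset.Icc 1 (M*n),
              Metric.closedBall (a ℓ / a n) (R n)) := measure_iUnion_le _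
        _ ≤ ∑' n : ℕ, ((M*n : ℕ) : ℝ≥0∞) * ENNReal.ofReal (2 * R n) := by
            refine ENNReal.tsum_le_tsum fun n => ?_
            calc volume (⋃ ℓ ∈ Finset.Icc 1 (M*n), Metric.closedBall (a ℓ / a n) (R n))
                ≤ ∑ ℓ ∈ Finset.Icc 1 (M*n), volume (Metric.closedBall (a ℓ / a n) (R n)) :=
                  measure_biUnion_finset_le _ _
              _ = ((M*n : ℕ) : ℝ≥0∞) * ENNReal.ofReal (2 * R n) := by
                  simp only [Real.volume_closedBall, Finset.sum_const, Nat.card_Icc,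
                    nsmul_eq_mul]
                  norm_num
    -- termwise real bound
    have step2 : ∀ n : ℕ, ((M*n : ℕ) : ℝ≥0∞) * ENNReal.ofReal (2 * R n) ≤
        ENNReal.ofReal ((2*M*(c⁻¹)^3*((a 1)⁻¹)^q) * (((n:ℝ))^2)⁻¹) := by
      intro n
      rcases Nat.eq_zero_or_pos n with rfl | hn
      · simp
      have hanpos := hapos n hn
      have hninv : (R n) ≤ ((a 1)^q * (c*(n:ℝ))^3)⁻¹ := by
        have hb1 : (a 1)^q ≤ (a n)^q := pow_le_pow_left₀ ha1pos.le (ha1le n hn) q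
        have hb2 : (c * n)^3 ≤ (a n)^3 := by
          have := (hlin n hn).1
          have hcn : (0:ℝ) ≤ c * n := by positivity
          exact pow_le_pow_left₀ hcn this 3
        have hprod : (a 1)^q * (c*n)^3 ≤ (a n)^(q+3) := by
          rw [pow_add]
          exact mul_le_mul hb1 hb2 (by positivity) (by positivity)
        have hppos : (0:ℝ) < (a 1)^q * (c*(n:ℝ))^3 := by
          have hn' : (0:ℝ) < n := by exact_mod_cast hn
          positivity
        rw [hR]
        simp only [zpow_neg, zpow_natCast]
        exact inv_anti₀ hppos hprod
      have hreal : ((M*n : ℕ) : ℝ) * (2 * R n) ≤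
          (2*M*(c⁻¹)^3*((a 1)⁻¹)^q) * (((n:ℝ))^2)⁻¹ := by
        have hn' : (0:ℝ) < n := by exact_mod_cast hn
        have hRn : 0 < R n := hRpos n hn
        have heq : (2*(M:ℝ)*(c⁻¹)^3*((a 1)⁻¹)^q) * (((n:ℝ))^2)⁻¹ =
            ((M*n : ℕ) : ℝ) * (2 * ((a 1)^q * (c*(n:ℝ))^3)⁻¹) := by
          have hane : (a 1) ≠ 0 := ne_of_gt ha1pos
          have hcne : c ≠ 0 := ne_of_gt hc
          have hnne : (n:ℝ) ≠ 0 := ne_of_gt hn'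
          push_cast
          simp only [inv_pow]
          field_simp
        rw [heq]
        gcongr
      calc ((M*n : ℕ) : ℝ≥0∞) * ENNReal.ofReal (2 * R n)
          = ENNReal.ofReal (((M*n : ℕ) : ℝ) * (2 * R n)) := by
            rw [← ENNReal.ofReal_natCast (M*n), ← ENNReal.ofReal_mul (Nat.cast_nonneg _)]
        _ ≤ ENNReal.ofReal ((2*M*(c⁻¹)^3*((a 1)⁻¹)^q) * (((n:ℝ))^2)⁻¹) :=
            ENNReal.ofReal_le_ofReal hreal
    -- sum up
    have step3 : ∑' n : ℕ, ((M*n : ℕ) : ℝ≥0∞) * ENNReal.ofReal (2 * R n) ≤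
        ENNReal.ofReal ((2*M*(c⁻¹)^3*T) * ((a 1)⁻¹)^q) := by
      calc ∑' n : ℕ, ((M*n : ℕ) : ℝ≥0∞) * ENNReal.ofReal (2 * R n)
          ≤ ∑' n : ℕ, ENNReal.ofReal ((2*M*(c⁻¹)^3*((a 1)⁻¹)^q) * (((n:ℝ))^2)⁻¹) :=
            ENNReal.tsum_le_tsum step2
        _ = ENNReal.ofReal (∑' n : ℕ, (2*M*(c⁻¹)^3*((a 1)⁻¹)^q) * (((n:ℝ))^2)⁻¹) := by
            rw [ENNReal.ofReal_tsum_of_nonneg]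
            · intro n
              have : (0:ℝ) ≤ ((a 1)⁻¹)^q := by positivity
              positivity
            · exact hTsum.mul_left _
        _ = ENNReal.ofReal ((2*M*(c⁻¹)^3*T) * ((a 1)⁻¹)^q) := by
            rw [tsum_mul_left]
            congr 1
            rw [hT]
            ring
    exact le_trans step1 step3
  -- take the limit q → ∞
  have htend : Filter.Tendsto (fun q : ℕ =>
      ENNReal.ofReal ((2*M*(c⁻¹)^3*T) * ((a 1)⁻¹)^q)) Filter.atTop (nhds 0) := by
    have h0 : Filter.Tendsto (fun q : ℕ => ((a 1)⁻¹)^q) Filter.atTop (nhds 0) := by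
      apply _root_.tendsto_pow_atTop_nhds_zero_of_lt_one
      · positivity
      · exact inv_lt_one_of_one_lt₀ h1
    have := (h0.const_mul (2*(M:ℝ)*(c⁻¹)^3*T))
    rw [mul_zero] at this
    have := ENNReal.tendsto_ofReal this
    simpa using this
  have := ge_of_tendsto' htend key
  exact le_antisymm (by simpa using this) zero_le
end

section
/- Let Z = {a_m}_{m≥1} be a strictly increasing sequence of positive reals with C₁⁻¹ m ≤ a_m ≤ C₁ m and C₂⁻¹ ≤ a_{m+1}-a_m ≤ C₂ for all m. Then for any 0 < x < y the set of Z-Liouville numbers in the interval (x, y) is uncountable; in particular the set of Z-Liouville numbers is uncountable and dense in (0, ∞). -/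
/-- The sequence is unbounded. -/
lemma Zaux_exists_big (a : ℕ → ℝ) (C₁ : ℝ) (hC₁ : 0 < C₁)
    (hg : ∀ m, 1 ≤ m → C₁⁻¹ * m ≤ a m) (c : ℝ) : ∃ n, 1 ≤ n ∧ c < a n := by
  obtain ⟨n, hn⟩ := exists_nat_gt (max 1 (c * C₁))
  have h1 : (1 : ℝ) < n := lt_of_le_of_lt (le_max_left _ _) hn
  have hn1 : 1 ≤ n := by exact_mod_cast h1.le
  refine ⟨n, hn1, lt_of_lt_of_le ?_ (hg n hn1)⟩
  have h2 : c * C₁ < n := lt_of_le_of_lt (le_max_right _ _) hn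
  rw [inv_mul_eq_div, lt_div_iff₀ hC₁]
  exact h2

/-- From unboundedness and bounded gaps: every interval `(t, t+C₂]` with `t ≥ a 1` meets
the sequence. -/
lemma Zaux_exists_mem (a : ℕ → ℝ) (C₁ C₂ : ℝ) (hC₁ : 0 < C₁) (hmono : StrictMono a)
    (hg : ∀ m, 1 ≤ m → C₁⁻¹ * m ≤ a m)
    (hgap : ∀ m, 1 ≤ m → a (m + 1) - a m ≤ C₂)
    (t : ℝ) (ht : a 1 ≤ t) : ∃ m, 1 ≤ m ∧ t < a m ∧ a m ≤ t + C₂ := by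
  have hex : ∃ n, t < a n := by
    obtain ⟨n, _, hn⟩ := Zaux_exists_big a C₁ hC₁ hg t
    exact ⟨n, hn⟩
  classical
  let m := Nat.find hex
  have hm : t < a m := Nat.find_spec hex
  have hm1 : 1 < m := by
    by_contra h
    push_neg at h
    interval_cases m
    · exact absurd hm (not_lt.2 ((hmono.le_iff_le.2 (Nat.zero_le 1)).trans ht))
    · exact absurd hm (not_lt.2 ht)
  have hprev : ¬ t < a (m - 1) := Nat.find_min hex (by omega)
  push_neg at hprev
  refine ⟨m, by omega, hm, ?_⟩
  have := hgap (m - 1) (by omega)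
  have hmm : m - 1 + 1 = m := by omega
  rw [hmm] at this
  linarith

/-- Density of ratios in `(0, ∞)`. -/
lemma Zaux_dense_ratio (a : ℕ → ℝ) (C₁ C₂ : ℝ) (hC₁ : 0 < C₁) (hmono : StrictMono a)
    (hg : ∀ m, 1 ≤ m → C₁⁻¹ * m ≤ a m)
    (hgap : ∀ m, 1 ≤ m → a (m + 1) - a m ≤ C₂)
    (u v : ℝ) (hu : 0 < u) (huv : u < v) :
    ∃ m n, 1 ≤ m ∧ 1 ≤ n ∧ 1 < a n ∧ a m / a n ∈ Set.Ioo u v := by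
  obtain ⟨n, hn1, hn⟩ := Zaux_exists_big a C₁ hC₁ hg (max 1 (max (a 1 / u) (C₂ / (v - u))))
  have han1 : 1 < a n := lt_of_le_of_lt (le_max_left _ _) hn
  have han0 : (0 : ℝ) < a n := lt_trans one_pos han1
  have h1 : a 1 / u < a n := lt_of_le_of_lt ((le_max_left _ _).trans (le_max_right _ _)) hn
  have h2 : C₂ / (v - u) < a n := lt_of_le_of_lt ((le_max_right _ _).trans (le_max_right _ _)) hn
  have ht : a 1 ≤ u * a n := by
    rw [div_lt_iff₀ hu] at h1
    nlinarith
  obtain ⟨m, hm1, hmt, hmt'⟩ := Zaux_exists_mem a C₁ C₂ hC₁ hmono hg hgap (u * a n) ht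
  have hC2 : C₂ < (v - u) * a n := by
    rw [div_lt_iff₀ (by linarith)] at h2
    nlinarith
  refine ⟨m, n, hm1, hn1, han1, ?_, ?_⟩
  · rw [lt_div_iff₀ han0]; exact hmt
  · rw [div_lt_iff₀ han0]; nlinarith

/-- The set of `Z`-Liouville numbers is uncountable in any interval `(x,y) ⊂ (0,∞)`, and dense
in `(0,∞)`. -/
theorem ZLiouville_uncountable_dense (a : ℕ → ℝ) (C₁ C₂ : ℝ) (hC₁ : 0 < C₁) (hC₂ : 0 < C₂)
    (hmono : StrictMono a) (hpos : ∀ m, 1 ≤ m → 0 < a m)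
    (hgrowth : ∀ m, 1 ≤ m → C₁⁻¹ * m ≤ a m ∧ a m ≤ C₁ * m)
    (hgap : ∀ m, 1 ≤ m → C₂⁻¹ ≤ a (m + 1) - a m ∧ a (m + 1) - a m ≤ C₂) :
    (∀ x y : ℝ, 0 < x → x < y →
      ¬(Set.Ioo x y ∩ {z : ℝ | ZLiouville {t : ℝ | ∃ m, 1 ≤ m ∧ a m = t} z}).Countable) ∧
    ∀ x y : ℝ, 0 < x → x < y →
      ∃ z ∈ Set.Ioo x y, ZLiouville {t : ℝ | ∃ m, 1 ≤ m ∧ a m = t} z := by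
  classical
  set Z : Set ℝ := {t : ℝ | ∃ m, 1 ≤ m ∧ a m = t} with hZ
  have hg : ∀ m, 1 ≤ m → C₁⁻¹ * m ≤ a m := fun m hm => (hgrowth m hm).1
  have hgap' : ∀ m, 1 ≤ m → a (m + 1) - a m ≤ C₂ := fun m hm => (hgap m hm).2
  -- Z-rationals are countable
  have hDcount : {z : ℝ | ZRational Z z}.Countable := by
    have : {z : ℝ | ZRational Z z} ⊆ Set.image2 (· / ·) (Set.range a) (Set.range a) := by
      rintro z ⟨b, ⟨m, _, hm⟩, c, ⟨n, _, hn⟩, rfl⟩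
      exact ⟨b, ⟨m, hm⟩, c, ⟨n, hn⟩, rfl⟩
    exact ((Set.countable_range a).image2 (Set.countable_range a) _).mono this
  -- the open approximation sets
  set G : ℕ → Set ℝ := fun N =>
    ⋃ (p : ℕ × ℕ) (_ : 1 ≤ p.1 ∧ 1 ≤ p.2 ∧ 1 < a p.2),
      Metric.ball (a p.1 / a p.2) (1 / (a p.2) ^ N) with hG
  have hGopen : ∀ N, IsOpen (G N) :=
    fun N => isOpen_iUnion fun p => isOpen_iUnion fun _ => Metric.isOpen_ball
  -- key lemma
  have key : ∀ x y : ℝ, 0 < x → x < y → ∀ T : Set ℝ, T.Countable →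
      ∃ z ∈ Set.Ioo x y, ZLiouville Z z ∧ z ∉ T := by
    intro x y hx hxy T hT
    set H : ℕ → Set ℝ := fun N => G N ∪ (Set.Icc x y)ᶜ with hH
    have hHres : ∀ N, H N ∈ residual ℝ := by
      intro N
      refine mem_residual.mpr ⟨H N, le_refl _, ((hGopen N).union isClosed_Icc.isOpen_compl).isGδ, ?_⟩
      -- density of H N
      intro w
      by_cases hwio : w ∈ Set.Ioo x y
      · -- find ratio points arbitrarily near w
        have : w ∈ closure (G N) := by
          rw [Metric.mem_closure_iff]
          intro ε hε
          have hw0 : 0 < w := lt_trans hx hwio.1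
          set u := max (w - ε) (w / 2) with hu
          have hu0 : 0 < u := lt_of_lt_of_le (by linarith) (le_max_right _ _)
          have huw : u < w := max_lt (by linarith) (by linarith)
          obtain ⟨m, n, hm1, hn1, han, hr⟩ :=
            Zaux_dense_ratio a C₁ C₂ hC₁ hmono hg hgap' u (w + ε) hu0 (by linarith)
          have hrG : a m / a n ∈ G N := by
            refine Set.mem_iUnion.2 ⟨⟨m, n⟩, Set.mem_iUnion.2 ⟨⟨hm1, hn1, han⟩, ?_⟩⟩
            simp only [Metric.mem_ball, dist_self]
            positivity
          refine ⟨a m / a n, hrG, ?_⟩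
          rw [Real.dist_eq, abs_lt]
          have h1 : w - ε ≤ u := le_max_left _ _
          constructor
          · linarith [hr.2]
          · linarith [hr.1]
        exact closure_mono Set.subset_union_left this
      · have : w ∈ closure ((Set.Icc x y)ᶜ) := by
          rw [closure_compl, interior_Icc]
          exact hwio
        exact closure_mono Set.subset_union_right this
    -- build the residual set and pick a point in it inside (x,y)
    have hres : ((⋂ N, H N) ∩ ({z : ℝ | ZRational Z z} ∪ T)ᶜ) ∈ residual ℝ := by
      refine Filter.inter_mem (countable_iInter_mem.mpr hHres) ?_
      have hc : ({z : ℝ | ZRational Z z} ∪ T).Countable := hDcount.union hT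
      have : ({z : ℝ | ZRational Z z} ∪ T)ᶜ = ⋂ d ∈ ({z : ℝ | ZRational Z z} ∪ T), {d}ᶜ := by
        ext w
        simp only [Set.mem_compl_iff, Set.mem_iInter, Set.mem_singleton_iff]
        constructor
        · rintro h d hd rfl; exact h hd
        · intro h hw; exact h w hw rfl
      rw [this]
      refine (countable_bInter_mem hc).mpr ?_
      intro d _
      exact mem_residual.mpr ⟨{d}ᶜ, le_refl _, isOpen_compl_singleton.isGδ, dense_compl_singleton d⟩
    have hdense := dense_of_mem_residual hres
    obtain ⟨z, hzR, hzI⟩ := hdense.exists_mem_open isOpen_Ioo (Set.nonempty_Ioo.mpr hxy)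
    obtain ⟨hzH, hzC⟩ := hzR
    rw [Set.mem_compl_iff, Set.mem_union] at hzC
    push_neg at hzC
    refine ⟨z, hzI, ⟨hzC.1, ?_⟩, hzC.2⟩
    intro N
    have hzG : z ∈ G N := by
      have := Set.mem_iInter.1 hzH N
      rcases this with h | h
      · exact h
      · exact absurd (Set.mem_Icc.2 ⟨hzI.1.le, hzI.2.le⟩) h
    obtain ⟨p, hp⟩ := Set.mem_iUnion.1 hzG
    obtain ⟨⟨hp1, hp2, hp3⟩, hpball⟩ := Set.mem_iUnion.1 hp
    refine ⟨a p.1, ⟨p.1, hp1, rfl⟩, a p.2, ⟨p.2, hp2, rfl⟩, hp3, ?_⟩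
    rw [Metric.mem_ball, Real.dist_eq] at hpball
    exact hpball
  constructor
  · intro x y hx hxy hcount
    obtain ⟨z, hzI, hzL, hzT⟩ := key x y hx hxy _ hcount
    exact hzT ⟨hzI, hzL⟩
  · intro x y hx hxy
    obtain ⟨z, hzI, hzL, _⟩ := key x y hx hxy ∅ Set.countable_empty
    exact ⟨z, hzI, hzL⟩
end
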